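/- arXiv:2503.17255 — 9 statements merged into one kernel-verified Lean document; each statement's English description precedes it below -/
import Mathlib

section
/- Let Ω be a compact metric space, ν a Borel probability measure on Ω, f : Ω → ℝ a continuous function, f_max = max_{x∈Ω} f(x), f_min = min_{x∈Ω} f(x), and u ∈ [f_min, f_max). If λ* ∈ [0, 1/(f_max − u)] is a point at which the supremum sup_{λ ∈ [0, 1/(f_max − u)]} ∫_Ω log(1 − λ(f(x) − u)) dν(x) is attained, then ∫_Ω 1/(1 − λ*(f(x) − u)) dν(x) ≤ 1; in particular, if λ* = 1/(f_max − u) then ν(f⁻¹({f_max})) = 0. -/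
open MeasureTheory
open scoped ENNReal NNReal Classical

/-- Kullback–Leibler divergence between two measures, valued in `[0, ∞]`.
For probability measures `ν ≪ μ`, the negative part of `llr ν μ` is always
`ν`-integrable, so non-integrability corresponds to a divergence of `∞`. -/
noncomputable def KLm {Ω : Type*} [MeasurableSpace Ω] (ν μ : Measure Ω) : ℝ≥0∞ :=
  if ν ≪ μ ∧ Integrable (llr ν μ) ν then ENNReal.ofReal (∫ x, llr ν μ x ∂ν) else ⊤

/-- `Kinf(ν, u, f)`: infimum of `KL(ν‖μ)` over probability measures `μ` with
`∫ f dμ ≥ u`, with the convention `inf ∅ = ∞`. -/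
noncomputable def Kinf {Ω : Type*} [MeasurableSpace Ω] (ν : Measure Ω) (u : ℝ)
    (f : Ω → ℝ) : ℝ≥0∞ :=
  ⨅ (μ : Measure Ω) (_ : IsProbabilityMeasure μ ∧ u ≤ ∫ x, f x ∂μ), KLm ν μ

/-- Extended logarithm: `log t`, interpreted as `-∞` when `t = 0`. -/
noncomputable def elog (t : ℝ) : EReal := if t = 0 then ⊥ else ((Real.log t : ℝ) : EReal)

/-- Positive part of an extended real, as an element of `ℝ≥0∞`. -/
noncomputable def ePos (z : EReal) : ℝ≥0∞ := if z = ⊤ then ⊤ else ENNReal.ofReal z.toReal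

/-- Integral of an `EReal`-valued function: positive part minus negative part. -/
noncomputable def eIntegral {Ω : Type*} [MeasurableSpace Ω] (ν : Measure Ω)
    (g : Ω → EReal) : EReal :=
  ((∫⁻ x, ePos (g x) ∂ν : ℝ≥0∞) : EReal) - ((∫⁻ x, ePos (-(g x)) ∂ν : ℝ≥0∞) : EReal)

lemma ePos_coe (r : ℝ) : ePos (r : EReal) = ENNReal.ofReal r := by
  simp [ePos]

lemma ePos_neg_coe (r : ℝ) : ePos (-(r : EReal)) = ENNReal.ofReal (-r) := by
  rw [← EReal.coe_neg, ePos_coe]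

lemma coe_ennreal_fin (a : ℝ≥0∞) (h : a ≠ ⊤) : (a : EReal) = ((a.toReal : ℝ) : EReal) := by
  conv_lhs => rw [← ENNReal.ofReal_toReal h]
  rw [EReal.coe_ennreal_ofReal, max_eq_left ENNReal.toReal_nonneg]

lemma eIntegral_congr_ae {Ω : Type*} [MeasurableSpace Ω] {ν : Measure Ω} {g h : Ω → EReal}
    (hgh : g =ᵐ[ν] h) : eIntegral ν g = eIntegral ν h := by
  unfold eIntegral
  have e1 : ∫⁻ x, ePos (g x) ∂ν = ∫⁻ x, ePos (h x) ∂ν :=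
    lintegral_congr_ae (hgh.mono fun x hx => by dsimp only; rw [hx])
  have e2 : ∫⁻ x, ePos (-g x) ∂ν = ∫⁻ x, ePos (-h x) ∂ν :=
    lintegral_congr_ae (hgh.mono fun x hx => by dsimp only; rw [hx])
  rw [e1, e2]

lemma eIntegral_coe {Ω : Type*} [MeasurableSpace Ω] {ν : Measure Ω} {φ : Ω → ℝ}
    (hφ : Integrable φ ν) :
    eIntegral ν (fun x => (φ x : EReal)) = ((∫ x, φ x ∂ν : ℝ) : EReal) := by
  unfold eIntegral
  simp only [ePos_coe, ePos_neg_coe]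
  have hP : (∫⁻ x, ENNReal.ofReal (φ x) ∂ν) ≠ ⊤ := by
    refine ne_of_lt (lt_of_le_of_lt (lintegral_mono fun x => ?_) hφ.2)
    exact Real.ofReal_le_enorm (φ x)
  have hN : (∫⁻ x, ENNReal.ofReal (-φ x) ∂ν) ≠ ⊤ := by
    refine ne_of_lt (lt_of_le_of_lt (lintegral_mono fun x => ?_) hφ.2)
    rw [← enorm_neg]
    exact Real.ofReal_le_enorm (-φ x)
  rw [integral_eq_lintegral_pos_part_sub_lintegral_neg_part hφ,
    coe_ennreal_fin _ hP, coe_ennreal_fin _ hN, ← EReal.coe_sub]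

lemma key_main {Ω : Type*} [MeasurableSpace Ω] (ν : Measure Ω) [IsProbabilityMeasure ν]
    (f : Ω → ℝ) (hfm : Measurable f) (u C M : ℝ) (hM : 0 < M) (hC : 0 ≤ C)
    (hub : ∀ x, f x - u ≤ M) (hlb : ∀ x, -C ≤ f x - u)
    (l : ℝ) (hl0 : 0 < l) (hlM : l ≤ 1 / M)
    (hopt : ∀ l' ∈ Set.Icc (0 : ℝ) (1 / M),
        eIntegral ν (fun x => elog (1 - l' * (f x - u)))
          ≤ eIntegral ν (fun x => elog (1 - l * (f x - u)))) :
    ν {x | 1 - l * (f x - u) = 0} = 0 ∧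
      ∀ lam, 0 ≤ lam → lam < l →
        ∫ x, (f x - u) / (1 - lam * (f x - u)) ∂ν ≤ 0 := by
  have hlM1 : l * M ≤ 1 := by
    have := (le_div_iff₀ hM).mp hlM; linarith
  have hnneg : ∀ x, 0 ≤ 1 - l * (f x - u) := by
    intro x
    nlinarith [mul_le_mul_of_nonneg_left (hub x) hl0.le]
  have hposlt : ∀ lam, 0 ≤ lam → lam < l → ∀ x, 0 < 1 - lam * (f x - u) := by
    intro lam h0 hlt x
    nlinarith [mul_le_mul_of_nonneg_left (hub x) h0, mul_lt_mul_of_pos_right hlt hM]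
  have hup : ∀ lam, 0 ≤ lam → lam ≤ l → ∀ x, 1 - lam * (f x - u) ≤ 1 + l * C := by
    intro lam h0 hle x
    nlinarith [mul_le_mul_of_nonneg_left (hlb x) h0, mul_le_mul_of_nonneg_right hle hC]
  have hmden : ∀ lam : ℝ, Measurable fun x => 1 - lam * (f x - u) :=
    fun lam => measurable_const.sub ((hfm.sub measurable_const).const_mul lam)
  have int_bdd : ∀ {φ : Ω → ℝ}, Measurable φ → ∀ {c : ℝ}, (∀ x, |φ x| ≤ c) →
      Integrable φ ν := by
    intro φ hm c hb
    exact ⟨hm.aestronglyMeasurable, HasFiniteIntegral.of_bounded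
      (ae_of_all _ fun x => by rw [Real.norm_eq_abs]; exact hb x)⟩
  have int_log : ∀ lam, 0 ≤ lam → lam < l →
      Integrable (fun x => Real.log (1 - lam * (f x - u))) ν := by
    intro lam h0 hlt
    have hpos := hposlt lam h0 hlt
    have hd : 0 < 1 - lam * M := by nlinarith [mul_lt_mul_of_pos_right hlt hM]
    refine int_bdd (Real.measurable_log.comp (hmden lam))
      (c := |Real.log (1 - lam * M)| ⊔ |Real.log (1 + l * C)|) fun x => ?_
    refine abs_le_max_abs_abs (Real.log_le_log hd ?_) (Real.log_le_log (hpos x) (hup lam h0 hlt.le x))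
    nlinarith [mul_le_mul_of_nonneg_left (hub x) h0]
  have int_q : ∀ lam, 0 ≤ lam → lam < l →
      Integrable (fun x => (f x - u) / (1 - lam * (f x - u))) ν := by
    intro lam h0 hlt
    have hpos := hposlt lam h0 hlt
    have hd : 0 < 1 - lam * M := by nlinarith [mul_lt_mul_of_pos_right hlt hM]
    refine int_bdd ((hfm.sub measurable_const).div (hmden lam))
      (c := (M ⊔ C) / (1 - lam * M)) fun x => ?_
    rw [abs_div, abs_of_pos (hpos x)]
    refine div_le_div₀ (le_sup_of_le_left hM.le) ?_ hd ?_
    · rcases abs_cases (f x - u) with ⟨h1, _⟩ | ⟨h1, _⟩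
      · rw [h1]; exact le_sup_of_le_left (hub x)
      · rw [h1]; exact le_sup_of_le_right (by linarith [hlb x])
    · nlinarith [mul_le_mul_of_nonneg_left (hub x) h0]
  set P := ∫⁻ x, ePos (elog (1 - l * (f x - u))) ∂ν with hPdef
  set N := ∫⁻ x, ePos (-(elog (1 - l * (f x - u)))) ∂ν with hNdef
  have hE0 : eIntegral ν (fun x => elog (1 - l * (f x - u))) = (P : EReal) - (N : EReal) := rfl
  have h00 : (0 : EReal) ≤ eIntegral ν (fun x => elog (1 - l * (f x - u))) := by
    have h0 := hopt 0 ⟨le_refl 0, by positivity⟩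
    have hz : eIntegral ν (fun x => elog (1 - 0 * (f x - u))) = 0 := by
      simp [eIntegral, elog, ePos]
    rwa [hz] at h0
  have hPne : P ≠ ⊤ := by
    have hb : ∀ x, ePos (elog (1 - l * (f x - u))) ≤ ENNReal.ofReal (Real.log (1 + l * C)) := by
      intro x
      by_cases h : (1 - l * (f x - u)) = 0
      · simp [elog, h, ePos]
      · rw [elog, if_neg h, ePos_coe]
        exact ENNReal.ofReal_le_ofReal
          (Real.log_le_log (lt_of_le_of_ne (hnneg x) (Ne.symm h)) (hup l hl0.le le_rfl x))
    refine ne_of_lt (lt_of_le_of_lt (lintegral_mono hb) ?_)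
    rw [lintegral_const, measure_univ, mul_one]
    exact ENNReal.ofReal_lt_top
  have hNne : N ≠ ⊤ := by
    intro hN
    rw [hE0, hN, EReal.coe_ennreal_top, EReal.sub_top] at h00
    simp at h00
  have hA0 : ν {x | 1 - l * (f x - u) = 0} = 0 := by
    have hAm : MeasurableSet {x | 1 - l * (f x - u) = 0} :=
      (hmden l) (measurableSet_singleton 0)
    by_contra hA
    have h1 : ∫⁻ x in {x | 1 - l * (f x - u) = 0}, ePos (-(elog (1 - l * (f x - u)))) ∂ν
        = ⊤ * ν {x | 1 - l * (f x - u) = 0} := by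
      have hptw : ∀ x ∈ {x | 1 - l * (f x - u) = 0},
          ePos (-(elog (1 - l * (f x - u)))) = ⊤ := by
        intro x hx
        have hx' : 1 - l * (f x - u) = 0 := hx
        simp [elog, hx', ePos]
      rw [setLIntegral_congr_fun hAm (fun x hx => hptw x hx), setLIntegral_const]
    have h2 : ⊤ * ν {x | 1 - l * (f x - u) = 0} ≤ N :=
      h1 ▸ lintegral_mono' Measure.restrict_le_self (le_refl _)
    rw [ENNReal.top_mul hA] at h2
    exact hNne (top_le_iff.mp h2)
  refine ⟨hA0, ?_⟩
  have hAne : ∀ᵐ x ∂ν, ¬(1 - l * (f x - u) = 0) := by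
    rw [ae_iff]
    simpa using hA0
  have hAE : (fun x => elog (1 - l * (f x - u)))
      =ᵐ[ν] fun x => ((Real.log (1 - l * (f x - u)) : ℝ) : EReal) := by
    filter_upwards [hAne] with x hx
    rw [elog, if_neg hx]
  have hPφ : ∫⁻ x, ENNReal.ofReal (Real.log (1 - l * (f x - u))) ∂ν = P :=
    (lintegral_congr_ae (hAE.mono fun x hx => by
      rw [show elog (1 - l * (f x - u)) = ((Real.log (1 - l * (f x - u)) : ℝ) : EReal) from hx,
        ePos_coe])).symm
  have hNφ : ∫⁻ x, ENNReal.ofReal (-(Real.log (1 - l * (f x - u)))) ∂ν = N :=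
    (lintegral_congr_ae (hAE.mono fun x hx => by
      rw [show elog (1 - l * (f x - u)) = ((Real.log (1 - l * (f x - u)) : ℝ) : EReal) from hx,
        ePos_neg_coe])).symm
  have hint_l : Integrable (fun x => Real.log (1 - l * (f x - u))) ν := by
    refine ⟨(Real.measurable_log.comp (hmden l)).aestronglyMeasurable, ?_⟩
    rw [HasFiniteIntegral]
    have hb : ∀ x, ‖Real.log (1 - l * (f x - u))‖ₑ
        ≤ ENNReal.ofReal (Real.log (1 - l * (f x - u)))
          + ENNReal.ofReal (-(Real.log (1 - l * (f x - u)))) := by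
      intro x
      rw [Real.enorm_eq_ofReal_abs]
      rcases abs_cases (Real.log (1 - l * (f x - u))) with ⟨h1, _⟩ | ⟨h1, _⟩
      · rw [h1]; exact le_self_add
      · rw [h1]; exact le_add_self
    refine lt_of_le_of_lt (lintegral_mono hb) ?_
    have hmeas : Measurable fun x => ENNReal.ofReal (Real.log (1 - l * (f x - u))) :=
      (Real.measurable_log.comp (hmden l)).ennreal_ofReal
    rw [lintegral_add_left hmeas, hPφ, hNφ]
    exact ENNReal.add_lt_top.mpr ⟨lt_top_iff_ne_top.2 hPne, lt_top_iff_ne_top.2 hNne⟩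
  have hE : eIntegral ν (fun x => elog (1 - l * (f x - u)))
      = ((∫ x, Real.log (1 - l * (f x - u)) ∂ν : ℝ) : EReal) :=
    (eIntegral_congr_ae hAE).trans (eIntegral_coe hint_l)
  intro lam h0 hlt
  have hs := hposlt lam h0 hlt
  have hfun : (fun x => elog (1 - lam * (f x - u)))
      = fun x => ((Real.log (1 - lam * (f x - u)) : ℝ) : EReal) :=
    funext fun x => by rw [elog, if_neg (ne_of_gt (hs x))]
  have h1 := hopt lam ⟨h0, hlt.le.trans hlM⟩
  rw [hfun, eIntegral_coe (int_log lam h0 hlt), hE, EReal.coe_le_coe_iff] at h1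
  have hptw : ∀ᵐ x ∂ν, Real.log (1 - l * (f x - u))
      ≤ Real.log (1 - lam * (f x - u))
        + (lam - l) * ((f x - u) / (1 - lam * (f x - u))) := by
    filter_upwards [hAne] with x hx
    have ht : 0 < 1 - l * (f x - u) := lt_of_le_of_ne (hnneg x) (Ne.symm hx)
    have hs' : 0 < 1 - lam * (f x - u) := hs x
    have hlog : Real.log (1 - l * (f x - u)) - Real.log (1 - lam * (f x - u))
        ≤ (1 - l * (f x - u)) / (1 - lam * (f x - u)) - 1 := by
      have h := Real.log_le_sub_one_of_pos (div_pos ht hs')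
      rwa [Real.log_div (ne_of_gt ht) (ne_of_gt hs')] at h
    have htt : (1 - l * (f x - u)) / (1 - lam * (f x - u)) - 1
        = (lam - l) * ((f x - u) / (1 - lam * (f x - u))) := by
      rw [div_sub_one (ne_of_gt hs')]
      ring
    linarith [htt ▸ hlog]
  have hint_q := int_q lam h0 hlt
  have hint_rhs : Integrable (fun x => Real.log (1 - lam * (f x - u))
      + (lam - l) * ((f x - u) / (1 - lam * (f x - u)))) ν :=
    (int_log lam h0 hlt).add (hint_q.const_mul (lam - l))
  have h2 := integral_mono_ae hint_l hint_rhs hptw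
  rw [integral_add (int_log lam h0 hlt) (hint_q.const_mul (lam - l)),
    integral_const_mul] at h2
  have h3 : 0 ≤ (lam - l) * ∫ x, (f x - u) / (1 - lam * (f x - u)) ∂ν := by linarith
  by_contra hI
  push_neg at hI
  nlinarith [mul_pos (show (0:ℝ) < l - lam by linarith) hI]
lemma denom_pos {g M lam : ℝ} (hg : g ≤ M) (h0 : 0 ≤ lam) (hlt : lam * M < 1) :
    0 < 1 - lam * g := by
  nlinarith [mul_le_mul_of_nonneg_left hg h0]

lemma psi_mono {g C a b l : ℝ} (hC : 0 ≤ C) (h0a : 0 ≤ a) (hab : a ≤ b) (hgC : -C ≤ g)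
    (hsa : 0 < 1 - a * g) (hsb : 0 < 1 - b * g) :
    (1 - a * g)⁻¹ - (l - a) * C ≤ (1 - b * g)⁻¹ - (l - b) * C := by
  have key : (1 - b * g)⁻¹ - (1 - a * g)⁻¹
      = (b - a) * (g / ((1 - a * g) * (1 - b * g))) := by
    rw [inv_sub_inv (ne_of_gt hsb) (ne_of_gt hsa)]
    ring
  have hba : 0 ≤ b - a := by linarith
  suffices h : -(b - a) * C ≤ (1 - b * g)⁻¹ - (1 - a * g)⁻¹ by nlinarith
  rw [key]
  rcases le_or_gt 0 g with hg | hg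
  · have h1 : 0 ≤ (b - a) * (g / ((1 - a * g) * (1 - b * g))) :=
      mul_nonneg hba (div_nonneg hg (mul_pos hsa hsb).le)
    nlinarith
  · have ha1 : 1 ≤ 1 - a * g := by nlinarith
    have hb1 : 1 ≤ 1 - b * g := by nlinarith
    have hD : 1 ≤ (1 - a * g) * (1 - b * g) := by nlinarith
    have hgD : g ≤ g / ((1 - a * g) * (1 - b * g)) := by
      rw [div_eq_mul_inv]
      have hinv : ((1 - a * g) * (1 - b * g))⁻¹ ≤ 1 := inv_le_one_of_one_le₀ hD
      have hinv0 : 0 < ((1 - a * g) * (1 - b * g))⁻¹ := by positivity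
      nlinarith
    have h2 : -C ≤ g / ((1 - a * g) * (1 - b * g)) := le_trans hgC hgD
    nlinarith [mul_le_mul_of_nonneg_left h2 hba]

/-- **Variational formula for `Kinf` (properties of the maximizer).**
If `λ* ∈ [0, 1/(fmax − u)]` attains the supremum of
`λ ↦ ∫ log(1 − λ(f x − u)) dν x` over `[0, 1/(fmax − u)]`, then
`∫ 1/(1 − λ*(f x − u)) dν x ≤ 1` (with `1/0 = ∞`); in particular, if
`λ* = 1/(fmax − u)` then `ν(f⁻¹({fmax})) = 0`. -/
theorem stmt1 {Ω : Type*} [MetricSpace Ω] [CompactSpace Ω] [MeasurableSpace Ω]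
    [BorelSpace Ω] (ν : Measure Ω) [IsProbabilityMeasure ν]
    (f : Ω → ℝ) (hf : Continuous f)
    (fmin fmax : ℝ) (hmin : IsLeast (Set.range f) fmin)
    (hmax : IsGreatest (Set.range f) fmax)
    (u : ℝ) (hu : u ∈ Set.Ico fmin fmax)
    (l : ℝ) (hl : l ∈ Set.Icc (0 : ℝ) (1 / (fmax - u)))
    (hopt : ∀ l' ∈ Set.Icc (0 : ℝ) (1 / (fmax - u)),
        eIntegral ν (fun x => elog (1 - l' * (f x - u)))
          ≤ eIntegral ν (fun x => elog (1 - l * (f x - u)))) :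
    (∫⁻ x, (ENNReal.ofReal (1 - l * (f x - u)))⁻¹ ∂ν) ≤ 1 ∧
      (l = 1 / (fmax - u) → ν (f ⁻¹' {fmax}) = 0) := by
  have hfm : Measurable f := hf.measurable
  have hM : 0 < fmax - u := sub_pos.mpr hu.2
  rcases eq_or_lt_of_le hl.1 with hl0 | hl0
  · -- case l = 0
    constructor
    · have hc : ∀ x, (ENNReal.ofReal (1 - l * (f x - u)))⁻¹ = 1 := by
        intro x
        rw [← hl0]
        norm_num
    
      rw [lintegral_congr hc]
      simp
    · intro hll
      exfalso
      have hp : (0 : ℝ) < 1 / (fmax - u) := by positivity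
      rw [← hll, ← hl0] at hp
      exact lt_irrefl _ hp
  · -- case 0 < l
    have hC : (0 : ℝ) ≤ u - fmin := by linarith [hu.1]
    have hub : ∀ x, f x - u ≤ fmax - u := fun x => by
      have := hmax.2 (Set.mem_range_self x); linarith
    have hlb : ∀ x, -(u - fmin) ≤ f x - u := fun x => by
      have := hmin.2 (Set.mem_range_self x); linarith
    obtain ⟨hA0, hkey⟩ := key_main ν f hfm u (u - fmin) (fmax - u) hM hC hub hlb
      l hl0 hl.2 hopt
    have hlM1 : l * (fmax - u) ≤ 1 := by
      have := (le_div_iff₀ hM).mp hl.2; linarith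
    constructor
    · -- main lintegral bound via monotone convergence
      set lam : ℕ → ℝ := fun n => l - l * (1 / ((n : ℝ) + 1)) with hlam
      have hn1 : ∀ n : ℕ, (0 : ℝ) < (n : ℝ) + 1 := fun n => by positivity
      have hlam0 : ∀ n, 0 ≤ lam n := by
        intro n
        have h1 : 1 / ((n : ℝ) + 1) ≤ 1 := by
          rw [div_le_one (hn1 n)]; linarith [Nat.cast_nonneg (α := ℝ) n]
        have := mul_le_mul_of_nonneg_left h1 hl0.le
        simp only [hlam]; nlinarith
      have hlamlt : ∀ n, lam n < l := by
        intro n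
        have : 0 < l * (1 / ((n : ℝ) + 1)) := by positivity
        simp only [hlam]; linarith
      have hlammono : Monotone lam := by
        intro m n hmn
        have h1 : 1 / ((n : ℝ) + 1) ≤ 1 / ((m : ℝ) + 1) := by
          apply div_le_div_of_nonneg_left one_pos.le (hn1 m)
          exact_mod_cast by linarith [(Nat.cast_le (α := ℝ)).mpr hmn]
        have := mul_le_mul_of_nonneg_left h1 hl0.le
        simp only [hlam]; linarith
      have hlamtend : Filter.Tendsto lam Filter.atTop (nhds l) := by
        have h1 : Filter.Tendsto (fun n : ℕ => l * (1 / ((n : ℝ) + 1)))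
            Filter.atTop (nhds (l * 0)) :=
          tendsto_one_div_add_atTop_nhds_zero_nat.const_mul l
        have h2 := Filter.Tendsto.sub (tendsto_const_nhds (x := l)) h1
        rw [mul_zero, sub_zero] at h2
        exact h2
      have hlamM : ∀ n, lam n * (fmax - u) < 1 := by
        intro n
        have h1 : lam n < 1 / (fmax - u) := lt_of_lt_of_le (hlamlt n) hl.2
        exact (lt_div_iff₀ hM).mp h1
      have hpos : ∀ n x, 0 < 1 - lam n * (f x - u) :=
        fun n x => denom_pos (hub x) (hlam0 n) (hlamM n)
      have hnneg : ∀ x, 0 ≤ 1 - l * (f x - u) := by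
        intro x
        nlinarith [mul_le_mul_of_nonneg_left (hub x) hl0.le]
      set ψ : ℕ → Ω → ℝ :=
        fun n x => (1 - lam n * (f x - u))⁻¹ - (l - lam n) * (u - fmin) with hψ
      have hmono : Monotone fun n (x : Ω) => ENNReal.ofReal (ψ n x) := by
        intro m n hmn x
        exact ENNReal.ofReal_le_ofReal
          (psi_mono hC (hlam0 m) (hlammono hmn) (hlb x) (hpos m x) (hpos n x))
      have hmeas : ∀ n, Measurable fun x => ENNReal.ofReal (ψ n x) := by
        intro n
        exact ((((measurable_const.sub ((hfm.sub measurable_const).const_mul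
          (lam n))).inv).sub measurable_const)).ennreal_ofReal
      -- integrability of the inverse and the quotient
      have hdlow : ∀ n x, 1 - lam n * (fmax - u) ≤ 1 - lam n * (f x - u) := by
        intro n x
        nlinarith [mul_le_mul_of_nonneg_left (hub x) (hlam0 n)]
      have hdpos : ∀ n, 0 < 1 - lam n * (fmax - u) := fun n => by
        have := hlamM n; linarith
      have int_inv : ∀ n, Integrable (fun x => (1 - lam n * (f x - u))⁻¹) ν := by
        intro n
        refine ⟨((measurable_const.sub ((hfm.sub measurable_const).const_mul
          (lam n))).inv).aestronglyMeasurable, HasFiniteIntegral.of_bounded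
          (C := (1 - lam n * (fmax - u))⁻¹) (ae_of_all _ fun x => ?_)⟩
        rw [Real.norm_eq_abs, abs_of_pos (inv_pos.mpr (hpos n x))]
        exact inv_anti₀ (hdpos n) (hdlow n x)
      have int_q : ∀ n, Integrable
          (fun x => (f x - u) / (1 - lam n * (f x - u))) ν := by
        intro n
        refine ⟨((hfm.sub measurable_const).div (measurable_const.sub
          ((hfm.sub measurable_const).const_mul (lam n)))).aestronglyMeasurable,
          HasFiniteIntegral.of_bounded
          (C := ((fmax - u) ⊔ (u - fmin)) / (1 - lam n * (fmax - u)))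
          (ae_of_all _ fun x => ?_)⟩
        rw [Real.norm_eq_abs, abs_div, abs_of_pos (hpos n x)]
        refine div_le_div₀ (le_sup_of_le_left hM.le) ?_ (hdpos n) (hdlow n x)
        rcases abs_cases (f x - u) with ⟨h1, _⟩ | ⟨h1, _⟩
        · rw [h1]; exact le_sup_of_le_left (hub x)
        · rw [h1]; exact le_sup_of_le_right (by linarith [hlb x])
      have hbound : ∀ n, ∫⁻ x, ENNReal.ofReal (ψ n x) ∂ν ≤ 1 := by
        intro n
        have h1 : ∀ x, ψ n x ≤ (1 - lam n * (f x - u))⁻¹ := by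
          intro x
          have : 0 ≤ (l - lam n) * (u - fmin) :=
            mul_nonneg (by linarith [hlamlt n]) hC
          exact sub_le_self _ this
        calc ∫⁻ x, ENNReal.ofReal (ψ n x) ∂ν
            ≤ ∫⁻ x, ENNReal.ofReal ((1 - lam n * (f x - u))⁻¹) ∂ν :=
              lintegral_mono fun x => ENNReal.ofReal_le_ofReal (h1 x)
          _ = ENNReal.ofReal (∫ x, (1 - lam n * (f x - u))⁻¹ ∂ν) :=
              (ofReal_integral_eq_lintegral_ofReal (int_inv n)
                (ae_of_all _ fun x => (inv_pos.mpr (hpos n x)).le)).symm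
          _ ≤ 1 := by
              rw [← ENNReal.ofReal_one]
              apply ENNReal.ofReal_le_ofReal
              have hid : ∀ x, (1 - lam n * (f x - u))⁻¹
                  = 1 + lam n * ((f x - u) / (1 - lam n * (f x - u))) := by
                intro x
                have hne := ne_of_gt (hpos n x)
                field_simp
                ring
              rw [integral_congr_ae (ae_of_all _ hid), integral_add
                (integrable_const 1) ((int_q n).const_mul (lam n)),
                integral_const_mul, integral_const]
              simp only [probReal_univ, measure_univ, ENNReal.toReal_one, smul_eq_mul, one_mul]
              nlinarith [mul_nonneg (hlam0 n)
                (neg_nonneg.mpr (hkey (lam n) (hlam0 n) (hlamlt n)))]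
      have hsup : ∀ x, (⨆ n, ENNReal.ofReal (ψ n x))
          = (ENNReal.ofReal (1 - l * (f x - u)))⁻¹ := by
        intro x
        have hmx : Monotone fun n => ENNReal.ofReal (ψ n x) :=
          fun m n hmn => hmono hmn x
        by_cases hz : 1 - l * (f x - u) = 0
        · rw [hz, ENNReal.ofReal_zero, ENNReal.inv_zero]
          have hgx : f x - u = 1 / l := by
            field_simp
            linarith
          have hden : ∀ n : ℕ, 1 - lam n * (f x - u) = 1 / ((n : ℝ) + 1) := by
            intro n
            rw [hgx]
            simp only [hlam]
            field_simp
            ring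
          have hψval : ∀ n : ℕ, ψ n x = ((n : ℝ) + 1)
              - (l * (1 / ((n : ℝ) + 1))) * (u - fmin) := by
            intro n
            simp only [hψ]
            rw [hden n, one_div, inv_inv]
            simp only [hlam]
            ring
          have hlow : ∀ n : ℕ, ((n : ℝ) + 1) - l * (u - fmin) ≤ ψ n x := by
            intro n
            rw [hψval n]
            have h2 : 1 / ((n : ℝ) + 1) ≤ 1 := by
              rw [div_le_one (hn1 n)]; linarith [Nat.cast_nonneg (α := ℝ) n]
            have h3 : l * (1 / ((n : ℝ) + 1)) * (u - fmin) ≤ l * 1 * (u - fmin) :=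
              mul_le_mul_of_nonneg_right (mul_le_mul_of_nonneg_left h2 hl0.le) hC
            rw [mul_one] at h3
            linarith
          have htend0 : Filter.Tendsto (fun n : ℕ => ((n : ℝ) + 1) - l * (u - fmin))
              Filter.atTop Filter.atTop := by
            apply Filter.tendsto_atTop_add_const_right
            exact Filter.tendsto_atTop_add_const_right _ _ tendsto_natCast_atTop_atTop
          have htend : Filter.Tendsto (fun n => ψ n x) Filter.atTop Filter.atTop :=
            Filter.tendsto_atTop_mono hlow htend0
          have h3 : Filter.Tendsto (fun n => ENNReal.ofReal (ψ n x))
              Filter.atTop (nhds ⊤) := ENNReal.tendsto_ofReal_atTop.comp htend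
          exact (tendsto_nhds_unique (tendsto_atTop_iSup hmx) h3)
        · have hposl : 0 < 1 - l * (f x - u) := lt_of_le_of_ne (hnneg x) (Ne.symm hz)
          rw [← ENNReal.ofReal_inv_of_pos hposl]
          have htend : Filter.Tendsto (fun n => ψ n x) Filter.atTop
              (nhds ((1 - l * (f x - u))⁻¹)) := by
            have h1 : Filter.Tendsto (fun n => (1 - lam n * (f x - u))⁻¹)
                Filter.atTop (nhds ((1 - l * (f x - u))⁻¹)) :=
              ((tendsto_const_nhds.sub (hlamtend.mul_const (f x - u))).inv₀
                (ne_of_gt hposl))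
            have h2 : Filter.Tendsto (fun n => (l - lam n) * (u - fmin))
                Filter.atTop (nhds ((l - l) * (u - fmin))) :=
              (tendsto_const_nhds.sub hlamtend).mul_const _
            have h3 := h1.sub h2
            simpa using h3
          have h4 : Filter.Tendsto (fun n => ENNReal.ofReal (ψ n x))
              Filter.atTop (nhds (ENNReal.ofReal ((1 - l * (f x - u))⁻¹))) :=
            (ENNReal.continuous_ofReal.tendsto _).comp htend
          exact tendsto_nhds_unique (tendsto_atTop_iSup hmx) h4
      calc ∫⁻ x, (ENNReal.ofReal (1 - l * (f x - u)))⁻¹ ∂ν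
          = ∫⁻ x, ⨆ n, ENNReal.ofReal (ψ n x) ∂ν :=
            lintegral_congr fun x => (hsup x).symm
        _ = ⨆ n, ∫⁻ x, ENNReal.ofReal (ψ n x) ∂ν :=
            lintegral_iSup hmeas hmono
        _ ≤ 1 := iSup_le hbound
    · intro hll
      refine measure_mono_null ?_ hA0
      intro x hx
      have hfx : f x = fmax := hx
      show 1 - l * (f x - u) = 0
      rw [hll, hfx]
      rw [one_div, inv_mul_cancel₀ (ne_of_gt hM), sub_self]
end

section
/- Let Ω be a compact metric space, ν a Borel probability measure on Ω, and A a Borel subset of Ω with 0 < ν(A) < 1. Then for every u with ν(A) ≤ u < 1, inf{ KL(ν‖μ) : μ a Borel probability measure on Ω with μ(A) ≥ u } = kl(ν(A)‖u), and the infimum is attained at μ = u·ν(·∩A)/ν(A) + (1−u)·ν(·∖A)/ν(Ω∖A). -/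
open MeasureTheory
open scoped ENNReal NNReal Classical

lemma log_ge_one_sub_inv {t : ℝ} (ht : 0 < t) : 1 - t⁻¹ ≤ Real.log t := by
  have h := Real.log_le_sub_one_of_pos (inv_pos.mpr ht)
  rw [Real.log_inv] at h
  linarith

lemma klReal_mono {p u b : ℝ} (hp0 : 0 < p) (hp1 : p < 1) (hpu : p ≤ u) (hub : u ≤ b)
    (hb1 : b < 1) :
    p * Real.log (p / u) + (1 - p) * Real.log ((1 - p) / (1 - u))
      ≤ p * Real.log (p / b) + (1 - p) * Real.log ((1 - p) / (1 - b)) := by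
  have hu0 : 0 < u := lt_of_lt_of_le hp0 hpu
  have hb0 : 0 < b := lt_of_lt_of_le hu0 hub
  have hu1 : u < 1 := lt_of_le_of_lt hub hb1
  have h1 : Real.log (p / u) = Real.log p - Real.log u := Real.log_div hp0.ne' hu0.ne'
  have h2 : Real.log (p / b) = Real.log p - Real.log b := Real.log_div hp0.ne' hb0.ne'
  have h3 : Real.log ((1 - p) / (1 - u)) = Real.log (1 - p) - Real.log (1 - u) :=
    Real.log_div (by linarith) (by linarith)
  have h4 : Real.log ((1 - p) / (1 - b)) = Real.log (1 - p) - Real.log (1 - b) :=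
    Real.log_div (by linarith) (by linarith)
  rw [h1, h2, h3, h4]
  have k1 : Real.log b - Real.log u ≤ (b - u) / u := by
    have := Real.log_le_sub_one_of_pos (show (0:ℝ) < b / u by positivity)
    rw [Real.log_div hb0.ne' hu0.ne'] at this
    have : Real.log b - Real.log u ≤ b / u - 1 := this
    have e : b / u - 1 = (b - u) / u := by field_simp
    linarith [e ▸ this]
  have k2 : (b - u) / (1 - u) ≤ Real.log (1 - u) - Real.log (1 - b) := by
    have h := log_ge_one_sub_inv (show (0:ℝ) < (1 - u) / (1 - b) by
      apply div_pos <;> linarith)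
    rw [Real.log_div (by linarith) (by linarith), inv_div] at h
    have hne : (1:ℝ) - u ≠ 0 := by linarith
    have e : 1 - (1 - b) / (1 - u) = (b - u) / (1 - u) := by field_simp; ring
    linarith [e ▸ h]
  have key : p * (Real.log b - Real.log u) ≤ (1 - p) * (Real.log (1 - u) - Real.log (1 - b)) := by
    have step : p * ((b - u) / u) ≤ (1 - p) * ((b - u) / (1 - u)) := by
      rw [mul_div_assoc'] at *
      rw [mul_div_assoc']
      rw [div_le_div_iff₀ hu0 (by linarith : (0:ℝ) < 1 - u)]
      nlinarith [mul_nonneg (sub_nonneg.2 hub) (sub_nonneg.2 hpu)]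
    calc p * (Real.log b - Real.log u) ≤ p * ((b - u) / u) :=
          mul_le_mul_of_nonneg_left k1 hp0.le
      _ ≤ (1 - p) * ((b - u) / (1 - u)) := step
      _ ≤ (1 - p) * (Real.log (1 - u) - Real.log (1 - b)) :=
          mul_le_mul_of_nonneg_left k2 (by linarith)
  linarith

lemma setIntegral_llr_ge {Ω : Type*} [MeasurableSpace Ω] {ν μ : Measure Ω}
    [IsFiniteMeasure ν] [IsFiniteMeasure μ] (hac : ν ≪ μ)
    (hint : Integrable (llr ν μ) ν) {S : Set Ω} (hS : MeasurableSet S)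
    (hνS : ν S ≠ 0) (hμS : μ S ≠ 0) :
    (ν S).toReal * Real.log ((ν S).toReal / (μ S).toReal) ≤ ∫ x in S, llr ν μ x ∂ν := by
  set f := ν.rnDeriv μ with hf
  have hf_meas : Measurable f := Measure.measurable_rnDeriv ν μ
  set a := (ν S).toReal with ha_def
  set b := (μ S).toReal with hb_def
  have ha : 0 < a := ENNReal.toReal_pos hνS (measure_ne_top ν S)
  have hb : 0 < b := ENNReal.toReal_pos hμS (measure_ne_top μ S)
  set c := a / b with hc_def
  have hc : 0 < c := div_pos ha hb
  set g : Ω → ℝ := fun x => ((f x).toReal)⁻¹ with hg_def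
  have hg_meas : Measurable g := hf_meas.ennreal_toReal.inv
  have hg_nonneg : ∀ x, 0 ≤ g x := fun x => inv_nonneg.2 ENNReal.toReal_nonneg
  -- lintegral bound
  have hlint : ∫⁻ x in S, ENNReal.ofReal (g x) ∂ν ≤ μ S := by
    have step1 : ∀ x, ENNReal.ofReal (g x) ≤ (f x)⁻¹ := by
      intro x
      have : ENNReal.ofReal (g x) = ENNReal.ofReal ((f x)⁻¹).toReal := by
        rw [ENNReal.toReal_inv]
      rw [this]
      exact ENNReal.ofReal_toReal_le
    calc ∫⁻ x in S, ENNReal.ofReal (g x) ∂ν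
        ≤ ∫⁻ x in S, (f x)⁻¹ ∂ν := lintegral_mono fun x => step1 x
      _ = ∫⁻ x in S, f x * (f x)⁻¹ ∂μ := by
          exact (setLIntegral_rnDeriv_mul hac (hf_meas.inv.aemeasurable) hS).symm
      _ ≤ ∫⁻ _ in S, 1 ∂μ := by
          apply lintegral_mono
          intro x
          show f x * (f x)⁻¹ ≤ 1
          rcases eq_or_ne (f x) 0 with h | h
          · simp [h]
          rcases eq_or_ne (f x) ⊤ with h' | h'
          · simp [h']
          · rw [ENNReal.mul_inv_cancel h h']
      _ = μ S := by simp
  have hg_int : IntegrableOn g S ν := by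
    refine ⟨hg_meas.aestronglyMeasurable, ?_⟩
    rw [hasFiniteIntegral_iff_norm]
    calc ∫⁻ x, ENNReal.ofReal ‖g x‖ ∂(ν.restrict S)
        = ∫⁻ x in S, ENNReal.ofReal (g x) ∂ν := by
          congr 1; ext x; rw [Real.norm_of_nonneg (hg_nonneg x)]
      _ ≤ μ S := hlint
      _ < ⊤ := measure_lt_top μ S
  have hg_int_le : ∫ x in S, g x ∂ν ≤ b := by
    rw [integral_eq_lintegral_of_nonneg_ae (Filter.Eventually.of_forall fun x => hg_nonneg x)
      hg_meas.aestronglyMeasurable]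
    exact ENNReal.toReal_le_toReal (ne_top_of_le_ne_top (measure_ne_top μ S) hlint)
      (measure_ne_top μ S) |>.mpr hlint
  -- pointwise bound
  have hae : ∀ᵐ x ∂ν, Real.log c + 1 - c * g x ≤ llr ν μ x := by
    filter_upwards [Measure.rnDeriv_pos hac, hac.ae_le (Measure.rnDeriv_lt_top ν μ)]
      with x hx_pos hx_lt
    have ht : 0 < (f x).toReal := ENNReal.toReal_pos hx_pos.ne' hx_lt.ne
    have h := Real.log_le_sub_one_of_pos (show (0:ℝ) < c / (f x).toReal by positivity)
    rw [Real.log_div hc.ne' ht.ne'] at h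
    have : llr ν μ x = Real.log (f x).toReal := rfl
    rw [this]
    have : c / (f x).toReal = c * g x := by rw [hg_def]; ring
    rw [this] at h
    linarith
  -- integrate
  have h_lhs_int : Integrable (fun x => Real.log c + 1 - c * g x) (ν.restrict S) :=
    (integrable_const _).sub (hg_int.const_mul c)
  have hmono : ∫ x in S, (Real.log c + 1 - c * g x) ∂ν ≤ ∫ x in S, llr ν μ x ∂ν := by
    apply integral_mono_ae h_lhs_int (hint.restrict) (ae_restrict_of_ae hae)
  have hcomp : ∫ x in S, (Real.log c + 1 - c * g x) ∂ν
      = a * (Real.log c + 1) - c * ∫ x in S, g x ∂ν := by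
    rw [integral_sub (integrable_const _) (hg_int.const_mul c), integral_const,
      integral_const_mul]
    simp only [Measure.real, Measure.restrict_apply_univ, smul_eq_mul]
    rfl
  have : a * Real.log c ≤ ∫ x in S, (Real.log c + 1 - c * g x) ∂ν := by
    rw [hcomp]
    have h1 : c * ∫ x in S, g x ∂ν ≤ c * b := mul_le_mul_of_nonneg_left hg_int_le hc.le
    have h2 : c * b = a := by rw [hc_def]; field_simp
    nlinarith
  linarith [hmono, this]

/-- Binary Kullback–Leibler divergence `kl(p‖q)`, valued in `[0, ∞]`, with the
conventions `0·log(0/q) = 0` and `p·log(p/0) = ∞` for `p > 0` (and symmetrically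
`(1-p)·log((1-p)/0) = ∞` when `q = 1` and `p < 1`). -/
noncomputable def klBin (p q : ℝ) : ℝ≥0∞ :=
  if (0 < p ∧ q ≤ 0) ∨ (p < 1 ∧ 1 ≤ q) then ⊤
  else ENNReal.ofReal (p * Real.log (p / q) + (1 - p) * Real.log ((1 - p) / (1 - q)))

/-- The measure `u·ν(·∩A)/ν(A) + (1−u)·ν(·∖A)/ν(Ω∖A)`. -/
noncomputable def mixMeasure {Ω : Type*} [MeasurableSpace Ω] (ν : Measure Ω)
    (A : Set Ω) (u : ℝ) : Measure Ω :=
  (ENNReal.ofReal u / ν A) • ν.restrict A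
    + (ENNReal.ofReal (1 - u) / ν Aᶜ) • ν.restrict Aᶜ

/-- For a Borel probability measure `ν` on a compact metric space and a Borel set
`A` with `0 < ν(A) < 1`, for every `u` with `ν(A) ≤ u < 1`, the infimum of
`KL(ν‖μ)` over probability measures `μ` with `μ(A) ≥ u` equals `kl(ν(A)‖u)`,
and it is attained at `μ = u·ν(·∩A)/ν(A) + (1−u)·ν(·∖A)/ν(Ω∖A)`. -/
theorem stmt2 {Ω : Type*} [MetricSpace Ω] [CompactSpace Ω] [MeasurableSpace Ω]
    [BorelSpace Ω] (ν : Measure Ω) [IsProbabilityMeasure ν]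
    (A : Set Ω) (hA : MeasurableSet A) (hA0 : 0 < ν A) (hA1 : ν A < 1)
    (u : ℝ) (hu0 : (ν A).toReal ≤ u) (hu1 : u < 1) :
    (⨅ (μ : Measure Ω) (_ : IsProbabilityMeasure μ ∧ ENNReal.ofReal u ≤ μ A), KLm ν μ)
        = klBin (ν A).toReal u ∧
      IsProbabilityMeasure (mixMeasure ν A u) ∧
      ENNReal.ofReal u ≤ mixMeasure ν A u A ∧
      KLm ν (mixMeasure ν A u) = klBin (ν A).toReal u := by
  set p := (ν A).toReal with hp_def
  have hνA_ne : ν A ≠ 0 := hA0.ne'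
  have hνA_top : ν A ≠ ⊤ := measure_ne_top ν A
  have hp0 : 0 < p := ENNReal.toReal_pos hνA_ne hνA_top
  have hp1 : p < 1 := by
    have h := (ENNReal.toReal_lt_toReal hνA_top (by simp : (1:ℝ≥0∞) ≠ ⊤)).mpr hA1
    simpa using h
  have hupos : 0 < u := lt_of_lt_of_le hp0 hu0
  have hAc : ν Aᶜ = 1 - ν A := by
    rw [measure_compl hA hνA_top, measure_univ]
  have hνAc_ne : ν Aᶜ ≠ 0 := by
    rw [hAc]
    simp only [ne_eq, tsub_eq_zero_iff_le, not_le]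
    exact hA1
  have hνAc_top : ν Aᶜ ≠ ⊤ := measure_ne_top ν Aᶜ
  have hpc : (ν Aᶜ).toReal = 1 - p := by
    rw [hAc, ENNReal.toReal_sub_of_le hA1.le (by simp)]
    simp [hp_def]
  set c₁ := ENNReal.ofReal u / ν A with hc₁_def
  set c₂ := ENNReal.ofReal (1 - u) / ν Aᶜ with hc₂_def
  have hou : ENNReal.ofReal u ≠ 0 := by simp [ENNReal.ofReal_eq_zero]; linarith
  have hou' : ENNReal.ofReal (1 - u) ≠ 0 := by simp [ENNReal.ofReal_eq_zero]; linarith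
  have hc₁0 : c₁ ≠ 0 := by
    simp only [hc₁_def, ne_eq, ENNReal.div_eq_zero_iff, not_or]
    exact ⟨hou, hνA_top⟩
  have hc₁top : c₁ ≠ ⊤ := by
    simp only [hc₁_def, ne_eq, ENNReal.div_eq_top, not_or, not_and_or]
    exact ⟨Or.inr hνA_ne, Or.inl ENNReal.ofReal_ne_top⟩
  have hc₂0 : c₂ ≠ 0 := by
    simp only [hc₂_def, ne_eq, ENNReal.div_eq_zero_iff, not_or]
    exact ⟨hou', hνAc_top⟩
  have hc₂top : c₂ ≠ ⊤ := by
    simp only [hc₂_def, ne_eq, ENNReal.div_eq_top, not_or, not_and_or]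
    exact ⟨Or.inr hνAc_ne, Or.inl ENNReal.ofReal_ne_top⟩
  set g : Ω → ℝ≥0∞ := fun x => if x ∈ A then c₁ else c₂ with hg_def
  set ginv : Ω → ℝ≥0∞ := fun x => if x ∈ A then c₁⁻¹ else c₂⁻¹ with hginv_def
  have hg_meas : Measurable g := Measurable.ite hA measurable_const measurable_const
  have hginv_meas : Measurable ginv := Measurable.ite hA measurable_const measurable_const
  have hg_eq : g = A.indicator (fun _ => c₁) + Aᶜ.indicator (fun _ => c₂) := by
    funext x
    by_cases hx : x ∈ A <;> simp [hg_def, hx]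
  have hμ0 : mixMeasure ν A u = ν.withDensity g := by
    rw [hg_eq, withDensity_add_left (measurable_const.indicator hA),
      withDensity_indicator hA, withDensity_indicator hA.compl,
      withDensity_const, withDensity_const]
    rfl
  have hν_eq : (mixMeasure ν A u).withDensity ginv = ν := by
    rw [hμ0, ← withDensity_mul ν hg_meas hginv_meas]
    have : g * ginv = 1 := by
      funext x
      by_cases hx : x ∈ A
      · simp only [Pi.mul_apply, hg_def, hginv_def, if_pos hx, Pi.one_apply]
        exact ENNReal.mul_inv_cancel hc₁0 hc₁top
      · simp only [Pi.mul_apply, hg_def, hginv_def, if_neg hx, Pi.one_apply]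
        exact ENNReal.mul_inv_cancel hc₂0 hc₂top
    rw [this, withDensity_one]
  have hac : ν ≪ mixMeasure ν A u := by
    conv_lhs => rw [← hν_eq]
    exact withDensity_absolutelyContinuous _ _
  have hprob : IsProbabilityMeasure (mixMeasure ν A u) := by
    constructor
    simp only [mixMeasure, Measure.coe_add, Pi.add_apply, Measure.smul_apply, smul_eq_mul,
      Measure.restrict_apply_univ]
    rw [ENNReal.div_mul_cancel hνA_ne hνA_top, ENNReal.div_mul_cancel hνAc_ne hνAc_top,
      ← ENNReal.ofReal_add hupos.le (by linarith)]
    norm_num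
  haveI := hprob
  have hmixA : mixMeasure ν A u A = ENNReal.ofReal u := by
    simp only [mixMeasure, Measure.coe_add, Pi.add_apply, Measure.smul_apply, smul_eq_mul,
      Measure.restrict_apply hA]
    rw [Set.inter_self, Set.inter_compl_self, measure_empty, mul_zero, add_zero,
      ENNReal.div_mul_cancel hνA_ne hνA_top]
  have hrn : ν.rnDeriv (mixMeasure ν A u) =ᵐ[mixMeasure ν A u] ginv := by
    have h := Measure.rnDeriv_withDensity (mixMeasure ν A u) hginv_meas
    rwa [hν_eq] at h
  set r₁ := Real.log (p / u) with hr₁_def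
  set r₂ := Real.log ((1 - p) / (1 - u)) with hr₂_def
  set φ : Ω → ℝ := fun x => if x ∈ A then r₁ else r₂ with hφ_def
  have hc₁inv : (c₁⁻¹).toReal = p / u := by
    rw [ENNReal.toReal_inv, hc₁_def, ENNReal.toReal_div, ENNReal.toReal_ofReal hupos.le,
      ← hp_def, inv_div]
  have hc₂inv : (c₂⁻¹).toReal = (1 - p) / (1 - u) := by
    rw [ENNReal.toReal_inv, hc₂_def, ENNReal.toReal_div,
      ENNReal.toReal_ofReal (by linarith : (0:ℝ) ≤ 1 - u), hpc, inv_div]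
  have hllr : llr ν (mixMeasure ν A u) =ᵐ[ν] φ := by
    filter_upwards [hac.ae_le hrn] with x hx
    rw [llr, hx]
    by_cases hxA : x ∈ A
    · simp only [hginv_def, if_pos hxA, hφ_def, if_pos hxA, hr₁_def, hc₁inv]
    · simp only [hginv_def, if_neg hxA, hφ_def, if_neg hxA, hr₂_def, hc₂inv]
  have hφ_eq : φ = A.indicator (fun _ => r₁) + Aᶜ.indicator (fun _ => r₂) := by
    funext x
    by_cases hx : x ∈ A <;> simp [hφ_def, hx]
  have hφ_int : Integrable φ ν := by
    rw [hφ_eq]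
    exact ((integrable_const r₁).indicator hA).add ((integrable_const r₂).indicator hA.compl)
  have hint : Integrable (llr ν (mixMeasure ν A u)) ν := hφ_int.congr hllr.symm
  have h_integral : ∫ x, llr ν (mixMeasure ν A u) x ∂ν = p * r₁ + (1 - p) * r₂ := by
    rw [integral_congr_ae hllr, hφ_eq]
    simp only [Pi.add_apply]
    rw [integral_add ((integrable_const r₁).indicator hA)
      ((integrable_const r₂).indicator hA.compl)]
    rw [integral_indicator_const r₁ hA, integral_indicator_const r₂ hA.compl, measureReal_def, measureReal_def, hpc]
    simp [smul_eq_mul, mul_comm]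
    exact Or.inl rfl
  have hklBin : klBin p u
      = ENNReal.ofReal (p * Real.log (p / u) + (1 - p) * Real.log ((1 - p) / (1 - u))) := by
    rw [klBin, if_neg]
    rintro (⟨_, h⟩ | ⟨_, h⟩) <;> linarith
  have hKLmix : KLm ν (mixMeasure ν A u) = klBin p u := by
    rw [KLm, if_pos ⟨hac, hint⟩, h_integral, hklBin]
  have hlow : ∀ (μ : Measure Ω), IsProbabilityMeasure μ → ENNReal.ofReal u ≤ μ A →
      klBin p u ≤ KLm ν μ := by
    intro μ hμprob hμA
    haveI := hμprob
    rw [KLm]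
    split_ifs with h
    · obtain ⟨hac', hint'⟩ := h
      have hμA_ne : μ A ≠ 0 := by
        intro h0
        rw [h0] at hμA
        exact hou (le_antisymm hμA zero_le)
      have hμAc_ne : μ Aᶜ ≠ 0 := fun h0 => hνAc_ne (hac' h0)
      set b₁ := (μ A).toReal with hb₁_def
      have hb₁u : u ≤ b₁ := by
        rw [hb₁_def]
        exact (ENNReal.ofReal_le_iff_le_toReal (measure_ne_top μ A)).mp hμA
      have hμAc : μ Aᶜ = 1 - μ A := by
        rw [measure_compl hA (measure_ne_top μ A), measure_univ]
      have hb₁c : (μ Aᶜ).toReal = 1 - b₁ := by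
        rw [hμAc, ENNReal.toReal_sub_of_le prob_le_one (by simp)]
        simp [hb₁_def]
      have hb₁1 : b₁ < 1 := by
        have h1 : 0 < (μ Aᶜ).toReal := ENNReal.toReal_pos hμAc_ne (measure_ne_top μ Aᶜ)
        rw [hb₁c] at h1
        linarith
      have key1 := setIntegral_llr_ge hac' hint' hA hνA_ne hμA_ne
      have key2 := setIntegral_llr_ge hac' hint' hA.compl hνAc_ne hμAc_ne
      rw [hpc, hb₁c] at key2
      rw [← hp_def, ← hb₁_def] at key1
      have hsum : ∫ x, llr ν μ x ∂ν
          = (∫ x in A, llr ν μ x ∂ν) + ∫ x in Aᶜ, llr ν μ x ∂ν :=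
        (integral_add_compl hA hint').symm
      rw [hklBin]
      apply ENNReal.ofReal_le_ofReal
      calc p * Real.log (p / u) + (1 - p) * Real.log ((1 - p) / (1 - u))
          ≤ p * Real.log (p / b₁) + (1 - p) * Real.log ((1 - p) / (1 - b₁)) :=
            klReal_mono hp0 hp1 hu0 hb₁u hb₁1
        _ ≤ ∫ x, llr ν μ x ∂ν := by rw [hsum]; exact add_le_add key1 key2
    · exact le_top
  refine ⟨?_, hprob, hmixA.ge, hKLmix⟩
  apply le_antisymm
  · exact le_trans (iInf₂_le (mixMeasure ν A u) ⟨hprob, hmixA.ge⟩) hKLmix.le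
  · exact le_iInf fun μ => le_iInf fun hμ => hlow μ hμ.1 hμ.2
end

section
/- Let d ≥ 1, let p = (p_1,…,p_d) be a probability vector with p_i > 0 for all i, let α > 0, and let G_1,…,G_d be independent random variables with G_i ∼ Gamma(α·p_i, 1). Define the Dirichlet random vector X = (X_1,…,X_d) by X_i = G_i/(G_1+⋯+G_d). Then for every f ∈ ℝ^d and every u ∈ [min_i f_i, max_i f_i), P(Σ_{i=1}^d f_i X_i ≥ u) ≤ exp(−α·Kinf(p, u, f)). -/
open MeasureTheory ProbabilityTheory
open scoped ENNReal NNReal Classical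

/-- Kullback–Leibler divergence between two vectors on `{1,…,d}`, valued in
`[0, ∞]`: `Σ_{i : p i > 0} p i · log (p i / q i)`, equal to `∞` when `q i = 0 < p i`
for some `i`. -/
noncomputable def klVec {d : ℕ} (p q : Fin d → ℝ) : ℝ≥0∞ :=
  if ∀ i, 0 < p i → 0 < q i then
    ENNReal.ofReal (∑ i, if 0 < p i then p i * Real.log (p i / q i) else 0)
  else ⊤

/-- `Kinf(p, u, f)` for probability vectors: the infimum of `KL(p‖q)` over
probability vectors `q` with `Σ f i · q i ≥ u`, with `inf ∅ = ∞`. -/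
noncomputable def KinfVec {d : ℕ} (p : Fin d → ℝ) (u : ℝ) (f : Fin d → ℝ) : ℝ≥0∞ :=
  ⨅ (q : Fin d → ℝ)
    (_ : (∀ i, 0 ≤ q i) ∧ (∑ i, q i) = 1 ∧ u ≤ ∑ i, f i * q i), klVec p q

/-- `exp(−x)` for `x ∈ [0, ∞]`, with `exp(−∞) = 0`. -/
noncomputable def expNeg (x : ℝ≥0∞) : ℝ≥0∞ :=
  if x = ⊤ then 0 else ENNReal.ofReal (Real.exp (-x.toReal))

open Real Set

lemma expNeg_anti {x y : ℝ≥0∞} (h : x ≤ y) : expNeg y ≤ expNeg x := by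
  unfold expNeg
  split_ifs with h1 h2 h2
  · exact le_rfl
  · exact zero_le
  · exact absurd (h2 ▸ h) (by simp [h1])
  · exact ENNReal.ofReal_le_ofReal (Real.exp_le_exp.2 (by
      have := ENNReal.toReal_mono h1 h
      linarith))


lemma aux_ae (a s : ℝ) :
    (fun x => gammaPDFReal a 1 x * Real.exp (s * x)) =ᵐ[volume]
      (Set.Ioi (0:ℝ)).indicator
        (fun x => (Real.Gamma a)⁻¹ * (x ^ (a-1) * Real.exp (-((1-s) * x)))) := by
  have h0 : (volume : Measure ℝ) {(0:ℝ)} = 0 := measure_singleton 0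
  filter_upwards [compl_mem_ae_iff.2 h0] with x hx
  simp only [Set.mem_compl_iff, Set.mem_singleton_iff] at hx
  rcases lt_or_gt_of_ne hx with hneg | hpos
  · rw [Set.indicator_of_notMem (by simpa using hneg.le.not_gt)]
    simp [gammaPDFReal, not_le.2 hneg]
  · rw [Set.indicator_of_mem (Set.mem_Ioi.mpr hpos)]
    simp only [gammaPDFReal, if_pos hpos.le, Real.one_rpow]
    rw [mul_assoc, mul_assoc, ← Real.exp_add, one_div]
    ring_nf

lemma aux_intOn {a s : ℝ} (ha : 0 < a) (hs : s < 1) :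
    IntegrableOn (fun x : ℝ => x ^ (a-1) * Real.exp (-((1-s) * x))) (Set.Ioi 0) := by
  have := integrableOn_rpow_mul_exp_neg_mul_rpow (show (-1:ℝ) < a - 1 by linarith)
    one_pos (show 0 < 1 - s by linarith)
  refine this.congr_fun (fun x hx => ?_) measurableSet_Ioi
  simp only [Real.rpow_one, neg_mul]

lemma integrable_exp_gammaMeasure {a s : ℝ} (ha : 0 < a) (hs : s < 1) :
    Integrable (fun x => Real.exp (s * x)) (gammaMeasure a 1) := by
  have hmeas : Measurable fun x => (gammaPDFReal a 1 x).toNNReal :=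
    (measurable_gammaPDFReal a 1).real_toNNReal
  have hwd : gammaMeasure a 1
      = volume.withDensity (fun x => ((gammaPDFReal a 1 x).toNNReal : ℝ≥0∞)) := by
    unfold gammaMeasure gammaPDF
    rfl
  rw [hwd, integrable_withDensity_iff_integrable_smul hmeas]
  have hInd : Integrable ((Set.Ioi (0:ℝ)).indicator
      (fun x => (Real.Gamma a)⁻¹ * (x ^ (a-1) * Real.exp (-((1-s) * x))))) volume := by
    rw [integrable_indicator_iff measurableSet_Ioi]
    exact (aux_intOn ha hs).const_mul _
  refine (hInd.congr (aux_ae a s).symm).congr ?_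
  filter_upwards with x
  rw [NNReal.smul_def, Real.coe_toNNReal _ (gammaPDFReal_nonneg ha one_pos x), smul_eq_mul]

lemma integral_exp_gammaMeasure {a s : ℝ} (ha : 0 < a) (hs : s < 1) :
    ∫ x, Real.exp (s * x) ∂(gammaMeasure a 1) = (1 - s) ^ (-a) := by
  have hmeas : Measurable fun x => (gammaPDFReal a 1 x).toNNReal :=
    (measurable_gammaPDFReal a 1).real_toNNReal
  have hwd : gammaMeasure a 1
      = volume.withDensity (fun x => ((gammaPDFReal a 1 x).toNNReal : ℝ≥0∞)) := rfl
  rw [hwd, integral_withDensity_eq_integral_smul hmeas]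
  have h1 : ∫ x, (gammaPDFReal a 1 x).toNNReal • Real.exp (s * x)
      = ∫ x, ((Set.Ioi (0:ℝ)).indicator
        (fun x => (Real.Gamma a)⁻¹ * (x ^ (a-1) * Real.exp (-((1-s) * x))))) x := by
    refine integral_congr_ae ?_
    filter_upwards [aux_ae a s] with x hx
    rw [NNReal.smul_def, Real.coe_toNNReal _ (gammaPDFReal_nonneg ha one_pos x), smul_eq_mul, hx]
  rw [h1, integral_indicator measurableSet_Ioi, integral_const_mul,
    integral_rpow_mul_exp_neg_mul_Ioi ha (show 0 < 1 - s by linarith),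
    one_div, ← Real.rpow_neg_one (1-s),
    ← Real.rpow_mul (by linarith : (0:ℝ) ≤ 1 - s), neg_one_mul]
  have hG : Real.Gamma a ≠ 0 := (Real.Gamma_pos_of_pos ha).ne'
  field_simp

lemma exists_dual_lam {d : ℕ} [Nonempty (Fin d)] (p f : Fin d → ℝ) (hp : ∀ i, 0 < p i)
    (hp1 : (∑ i, p i) = 1) (u : ℝ) (i0 : Fin d) (hi0 : ∀ i, f i ≤ f i0) (hu : u < f i0)
    (hcase : ∑ i, f i * p i < u) :
    ∃ lam : ℝ, 0 ≤ lam ∧ (∀ i, lam * (f i - u) < 1) ∧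
      ∑ i, p i * (u - f i) / (1 - lam * (f i - u)) = 0 := by
  set M := f i0 with hM
  set C : ℝ := ∑ i, p i * |u - f i| with hC
  have hC0 : 0 ≤ C := Finset.sum_nonneg fun i _ => mul_nonneg (hp i).le (abs_nonneg _)
  have hMu : 0 < M - u := by linarith
  set s' : ℝ := min 1 (p i0 * (M - u) / (C + 1)) with hs'
  have hs'pos : 0 < s' := lt_min one_pos (div_pos (mul_pos (hp i0) hMu) (by linarith))
  have hs'le1 : s' ≤ 1 := min_le_left _ _
  set lam1 : ℝ := (1 - s') / (M - u) with hlam1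
  have hlam1nn : 0 ≤ lam1 := div_nonneg (by linarith) hMu.le
  have hlam1M : lam1 * (M - u) = 1 - s' := div_mul_cancel₀ _ hMu.ne'
  -- key bound on denominators
  have hbound : ∀ lam ∈ Icc 0 lam1, ∀ i, lam * (f i - u) ≤ 1 - s' := by
    intro lam hlam i
    rcases le_or_gt (f i) u with h | h
    · have : lam * (f i - u) ≤ 0 := mul_nonpos_of_nonneg_of_nonpos hlam.1 (by linarith)
      linarith
    · calc lam * (f i - u) ≤ lam1 * (f i - u) := by
            apply mul_le_mul_of_nonneg_right hlam.2 (by linarith)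
        _ ≤ lam1 * (M - u) := by
            apply mul_le_mul_of_nonneg_left (by have := hi0 i; linarith) hlam1nn
        _ = 1 - s' := hlam1M
  have hD : ∀ lam ∈ Icc 0 lam1, ∀ i, 0 < 1 - lam * (f i - u) := by
    intro lam hlam i
    have := hbound lam hlam i
    linarith
  set ψ : ℝ → ℝ := fun lam => ∑ i, p i * (u - f i) / (1 - lam * (f i - u)) with hψ
  have hψcont : ContinuousOn ψ (Icc 0 lam1) := by
    apply continuousOn_finset_sum
    intro i _
    exact ContinuousOn.div continuousOn_const
      (by fun_prop) (fun lam hlam => (hD lam hlam i).ne')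
  have hψ0 : 0 < ψ 0 := by
    have : ψ 0 = ∑ i, p i * (u - f i) := by
      simp [hψ]
    rw [this]
    have : ∑ i, p i * (u - f i) = u * (∑ i, p i) - ∑ i, f i * p i := by
      rw [Finset.mul_sum, ← Finset.sum_sub_distrib]
      exact Finset.sum_congr rfl fun i _ => by ring
    rw [this, hp1]
    linarith
  have hψ1 : ψ lam1 < 0 := by
    have hmemb : lam1 ∈ Icc 0 lam1 := ⟨le_refl 0 |>.trans hlam1nn, le_rfl⟩
    have h1 : ψ lam1 ≤ ∑ i, (if i = i0 then p i0 * (u - M) / s' else p i * |u - f i|) := by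
      apply Finset.sum_le_sum
      intro i _
      by_cases hii : i = i0
      · rw [hii, if_pos rfl]
        have h7 : 1 - lam1 * (f i0 - u) = s' := by
          rw [← hM]; linarith [hlam1M]
        rw [← hM, h7]
      · simp only [if_neg hii]
        rcases le_or_gt (u - f i) 0 with h | h
        · exact (div_nonpos_of_nonpos_of_nonneg
            (mul_nonpos_of_nonneg_of_nonpos (hp i).le h) (hD lam1 hmemb i).le).trans
            (mul_nonneg (hp i).le (abs_nonneg _))
        · have hden1 : 1 ≤ 1 - lam1 * (f i - u) := by
            have : lam1 * (f i - u) ≤ 0 :=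
              mul_nonpos_of_nonneg_of_nonpos hlam1nn (by linarith)
            linarith
          calc p i * (u - f i) / (1 - lam1 * (f i - u)) ≤ p i * (u - f i) :=
                div_le_self (mul_nonneg (hp i).le (by linarith)) hden1
            _ ≤ p i * |u - f i| := by
                apply mul_le_mul_of_nonneg_left (le_abs_self _) (hp i).le
    have h2 : ∑ i, (if i = i0 then p i0 * (u - M) / s' else p i * |u - f i|)
        ≤ p i0 * (u - M) / s' + C := by
      rw [← Finset.sum_erase_add _ _ (Finset.mem_univ i0), if_pos rfl]
      rw [add_comm]
      gcongr
      have : C = ∑ i ∈ Finset.univ.erase i0, p i * |u - f i| + p i0 * |u - f i0| := by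
        rw [hC, Finset.sum_erase_add _ _ (Finset.mem_univ i0)]
      rw [this]
      have h3 : ∑ i ∈ Finset.univ.erase i0, (if i = i0 then p i0 * (u - M) / s' else p i * |u - f i|)
          = ∑ i ∈ Finset.univ.erase i0, p i * |u - f i| := by
        apply Finset.sum_congr rfl
        intro i hi
        rw [if_neg (Finset.ne_of_mem_erase hi)]
      rw [h3]
      nlinarith [abs_nonneg (u - f i0), hp i0]
    have h4 : p i0 * (u - M) / s' ≤ -(C + 1) := by
      rw [div_le_iff₀ hs'pos]
      have h5 : s' ≤ p i0 * (M - u) / (C + 1) := min_le_right _ _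
      have h6 : s' * (C + 1) ≤ p i0 * (M - u) := by
        rw [← div_mul_cancel₀ (p i0 * (M - u)) (show (C:ℝ) + 1 ≠ 0 by linarith)]
        exact mul_le_mul_of_nonneg_right h5 (by linarith)
      nlinarith
    linarith
  have h0mem : (0:ℝ) ∈ Icc (ψ lam1) (ψ 0) := ⟨hψ1.le, hψ0.le⟩
  obtain ⟨lam, hlamIcc, hlam⟩ := intermediate_value_Icc' hlam1nn hψcont h0mem
  exact ⟨lam, hlamIcc.1, fun i => by have := hbound lam hlamIcc i; linarith, hlam⟩

lemma gammaMeasure_Iic_zero {a r : ℝ} : gammaMeasure a r (Iic 0) = 0 := by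
  rw [gammaMeasure, withDensity_apply _ measurableSet_Iic,
    Measure.restrict_congr_set Iio_ae_eq_Iic.symm, lintegral_gammaPDF_of_nonpos le_rfl]

/-- **Chernoff bound for the Dirichlet distribution.** If `G 1, …, G d` are
independent with `G i ∼ Gamma(α·p i, 1)` and `X i = G i / (G 1 + ⋯ + G d)`,
then for every `f ∈ ℝ^d` and `u ∈ [min f, max f)`,
`P(Σ f i · X i ≥ u) ≤ exp(−α · Kinf(p, u, f))`. -/
theorem stmt3 {Ω : Type*} [MeasurableSpace Ω] (P : Measure Ω) [IsProbabilityMeasure P]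
    {d : ℕ} (hd : 1 ≤ d) (p : Fin d → ℝ) (hp : ∀ i, 0 < p i) (hp1 : (∑ i, p i) = 1)
    (α : ℝ) (hα : 0 < α) (G : Fin d → Ω → ℝ) (hmeas : ∀ i, Measurable (G i))
    (hindep : iIndepFun G P)
    (hdist : ∀ i, P.map (G i) = gammaMeasure (α * p i) 1)
    (f : Fin d → ℝ) (u : ℝ)
    (hul : sInf (Set.range f) ≤ u) (huu : u < sSup (Set.range f)) :
    P {ω | u ≤ ∑ i, f i * (G i ω / ∑ j, G j ω)}
      ≤ expNeg (ENNReal.ofReal α * KinfVec p u f) := by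
  classical
  have hne : Nonempty (Fin d) := ⟨⟨0, hd⟩⟩
  set E := {ω | u ≤ ∑ i, f i * (G i ω / ∑ j, G j ω)} with hE
  -- reduce to finding one feasible q
  suffices h : ∃ q : Fin d → ℝ, ((∀ i, 0 ≤ q i) ∧ (∑ i, q i) = 1 ∧ u ≤ ∑ i, f i * q i) ∧
      P E ≤ expNeg (ENNReal.ofReal α * klVec p q) by
    obtain ⟨q, hq, hle⟩ := h
    refine hle.trans (expNeg_anti (mul_le_mul_right ?_ _))
    exact iInf₂_le q hq
  by_cases hcase : u ≤ ∑ i, f i * p i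
  · -- trivial case : q = p
    refine ⟨p, ⟨fun i => (hp i).le, hp1, hcase⟩, ?_⟩
    have hkl : klVec p p = 0 := by
      rw [klVec, if_pos (fun i h => h)]
      have : ∀ i ∈ Finset.univ, (if 0 < p i then p i * Real.log (p i / p i) else 0) = 0 := by
        intro i _
        rw [if_pos (hp i), div_self (hp i).ne', Real.log_one, mul_zero]
      rw [Finset.sum_congr rfl this, Finset.sum_const_zero, ENNReal.ofReal_zero]
    rw [hkl, mul_zero]
    unfold expNeg
    rw [if_neg (by simp), ENNReal.toReal_zero, neg_zero, Real.exp_zero, ENNReal.ofReal_one]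
    exact prob_le_one
  · push_neg at hcase
    -- max of f
    obtain ⟨i0, hi0⟩ := Finite.exists_max f
    have hM : sSup (Set.range f) = f i0 :=
      le_antisymm (csSup_le (Set.range_nonempty f) (by rintro _ ⟨i, rfl⟩; exact hi0 i))
        (le_csSup (Set.finite_range f).bddAbove ⟨i0, rfl⟩)
    rw [hM] at huu
    obtain ⟨lam, hlam0, hlam1, hlamψ⟩ := exists_dual_lam p f hp hp1 u i0 hi0 huu hcase
    have hD : ∀ i, 0 < 1 - lam * (f i - u) := fun i => by linarith [hlam1 i]
    set q : Fin d → ℝ := fun i => p i / (1 - lam * (f i - u)) with hqdef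
    have hqpos : ∀ i, 0 < q i := fun i => div_pos (hp i) (hD i)
    have hkey : ∑ i, q i * (f i - u) = 0 := by
      have : ∀ i, q i * (f i - u) = -(p i * (u - f i) / (1 - lam * (f i - u))) := by
        intro i
        rw [hqdef]
        field_simp
        ring
      rw [Finset.sum_congr rfl fun i _ => this i, Finset.sum_neg_distrib, hlamψ, neg_zero]
    have hq1 : ∑ i, q i = 1 := by
      have h1 : ∀ i, q i = p i + lam * (q i * (f i - u)) := by
        intro i
        have hmul : q i * (1 - lam * (f i - u)) = p i := div_mul_cancel₀ _ (hD i).ne'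
        linear_combination hmul
      rw [Finset.sum_congr rfl fun i _ => h1 i, Finset.sum_add_distrib, hp1,
        ← Finset.mul_sum, hkey, mul_zero, add_zero]
    have hqf : ∑ i, f i * q i = u := by
      have h1 : ∀ i, f i * q i = q i * (f i - u) + u * q i := fun i => by ring
      rw [Finset.sum_congr rfl fun i _ => h1 i, Finset.sum_add_distrib, hkey,
        ← Finset.mul_sum, hq1, mul_one, zero_add]
    set φ : ℝ := ∑ i, p i * Real.log (1 - lam * (f i - u)) with hφ
    have hkl : klVec p q = ENNReal.ofReal φ := by
      rw [klVec, if_pos (fun i _ => hqpos i)]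
      congr 1
      refine Finset.sum_congr rfl fun i _ => ?_
      rw [if_pos (hp i), hqdef]
      congr 2
      rw [div_div_eq_mul_div, mul_div_assoc, mul_comm, div_mul_cancel₀ _ (hp i).ne']
    refine ⟨q, ⟨fun i => (hqpos i).le, hq1, hqf.ge⟩, ?_⟩
    -- the random variables
    set Y : Fin d → Ω → ℝ := fun i ω => (f i - u) * G i ω with hY
    set X : Ω → ℝ := fun ω => ∑ i, Y i ω with hX
    have hXeq : X = ∑ i, Y i := by funext ω; rw [hX]; simp
    have hYmeas : ∀ i, Measurable (Y i) := fun i => (hmeas i).const_mul _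
    have hYindep : iIndepFun Y P := by
      have := hindep.comp (fun i => fun x : ℝ => (f i - u) * x)
        (fun i => measurable_id.const_mul _)
      exact this
    -- mgf of each Y i
    have hmgfY : ∀ i, mgf (Y i) P lam = (1 - lam * (f i - u)) ^ (-(α * p i)) := by
      intro i
      have h1 : mgf (Y i) P lam = ∫ ω, Real.exp ((lam * (f i - u)) * G i ω) ∂P := by
        rw [mgf]
        congr 1
        funext ω
        rw [hY]
        ring_nf
      have hg : AEStronglyMeasurable (fun x : ℝ => Real.exp ((lam * (f i - u)) * x))
          (P.map (G i)) :=
        (Measurable.exp (measurable_const.mul measurable_id)).aestronglyMeasurable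
      rw [h1, ← integral_map (hmeas i).aemeasurable hg,
        hdist i, integral_exp_gammaMeasure (mul_pos hα (hp i)) (hlam1 i)]
    -- integrability of each exp
    have hint : ∀ i, Integrable (fun ω => Real.exp (lam * Y i ω)) P := by
      intro i
      have h2 : Integrable (fun x => Real.exp ((lam * (f i - u)) * x)) (P.map (G i)) := by
        rw [hdist i]
        exact integrable_exp_gammaMeasure (mul_pos hα (hp i)) (hlam1 i)
      have hg : AEStronglyMeasurable (fun x : ℝ => Real.exp ((lam * (f i - u)) * x))
          (P.map (G i)) :=
        (Measurable.exp (measurable_const.mul measurable_id)).aestronglyMeasurable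
      have h3 := (integrable_map_measure hg (hmeas i).aemeasurable).mp h2
      refine h3.congr (Filter.Eventually.of_forall fun ω => ?_)
      simp only [Function.comp_apply, hY]
      ring_nf
    have hintX : Integrable (fun ω => Real.exp (lam * X ω)) P := by
      rw [hXeq]
      exact hYindep.integrable_exp_mul_sum hYmeas (fun i _ => hint i)
    -- Chernoff
    have hcher : (P {ω | 0 ≤ X ω}).toReal ≤ mgf X P lam := by
      have := measure_ge_le_exp_mul_mgf (X := X) (μ := P) 0 hlam0 hintX
      simpa [measureReal_def] using this
    have hmgfX : mgf X P lam = Real.exp (-(α * φ)) := by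
      rw [hXeq, hYindep.mgf_sum hYmeas,
        Finset.prod_congr rfl fun i _ => hmgfY i]
      have h1 : ∀ i ∈ Finset.univ, (1 - lam * (f i - u)) ^ (-(α * p i))
          = Real.exp (Real.log (1 - lam * (f i - u)) * (-(α * p i))) := fun i _ => by
        rw [Real.rpow_def_of_pos (hD i)]
      rw [Finset.prod_congr rfl h1, ← Real.exp_sum]
      congr 1
      rw [hφ, Finset.mul_sum, ← Finset.sum_neg_distrib]
      exact Finset.sum_congr rfl fun i _ => by ring
    -- event inclusion
    have haepos : ∀ᵐ ω ∂P, ∀ i, 0 < G i ω := by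
      rw [ae_all_iff]
      intro i
      rw [ae_iff]
      have h1 : {ω | ¬ 0 < G i ω} = G i ⁻¹' (Iic 0) := by
        ext ω; simp [not_lt]
      rw [h1, ← Measure.map_apply (hmeas i) measurableSet_Iic, hdist i, gammaMeasure_Iic_zero]
    have hsub : P E ≤ P {ω | 0 ≤ X ω} := by
      refine measure_mono_ae ?_
      filter_upwards [haepos] with ω hω hmem
      have hS : 0 < ∑ j, G j ω := Finset.sum_pos (fun j _ => hω j) Finset.univ_nonempty
      have hmem' : u ≤ (∑ i, f i * G i ω) / (∑ j, G j ω) := by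
        rw [Finset.sum_div]
        refine le_of_le_of_eq hmem (Finset.sum_congr rfl fun i _ => ?_)
        rw [mul_div_assoc]
      rw [le_div_iff₀ hS] at hmem'
      have hXω : X ω = (∑ i, f i * G i ω) - u * ∑ j, G j ω := by
        rw [hX, hY, Finset.mul_sum, ← Finset.sum_sub_distrib]
        exact Finset.sum_congr rfl fun i _ => by ring
      show 0 ≤ X ω
      rw [hXω]
      linarith
    -- finish
    have hfin : P E ≤ ENNReal.ofReal (Real.exp (-(α * φ))) := by
      calc P E ≤ P {ω | 0 ≤ X ω} := hsub
        _ = ENNReal.ofReal (P {ω | 0 ≤ X ω}).toReal :=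
          (ENNReal.ofReal_toReal (measure_ne_top P _)).symm
        _ ≤ ENNReal.ofReal (mgf X P lam) := ENNReal.ofReal_le_ofReal hcher
        _ = ENNReal.ofReal (Real.exp (-(α * φ))) := by rw [hmgfX]
    rcases le_or_gt 0 φ with hφ0 | hφ0
    · have hmul : ENNReal.ofReal α * klVec p q = ENNReal.ofReal (α * φ) := by
        rw [hkl, ← ENNReal.ofReal_mul hα.le]
      rw [hmul]
      unfold expNeg
      rw [if_neg ENNReal.ofReal_ne_top, ENNReal.toReal_ofReal (by positivity)]
      exact hfin
    · have hkl0 : klVec p q = 0 := by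
        rw [hkl, ENNReal.ofReal_eq_zero.mpr hφ0.le]
      rw [hkl0, mul_zero]
      unfold expNeg
      rw [if_neg (by simp), ENNReal.toReal_zero, neg_zero, Real.exp_zero, ENNReal.ofReal_one]
      exact prob_le_one
end

section
/- Let a, b > 0 and u ∈ (0,1). Let η* be the unique η ≥ 0 with R(η) = 0, where R(η) = ((u·b − (1−u)·(a−η))/b)·u^{−η} − 1. Let η ∈ [0, min(a, η*)], set x = (a−η)/(a+b−η), and assume u > x. Then for B ∼ Beta(a,b), log P(B ≥ u) − log P(B ≥ x) ≤ −(a+b−η)·kl(x‖u); equivalently, P(B ≥ u) ≤ P(B ≥ x)·exp(−(a+b−η)·kl(x‖u)). -/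
open MeasureTheory Set intervalIntegral
open scoped ENNReal NNReal Classical

/-- The Beta distribution on `[0,1]` with parameters `a, b > 0`, with density
`Γ(a+b)/(Γ(a)Γ(b)) · t^(a−1) (1−t)^(b−1)` on `(0,1)`. -/
noncomputable def betaMeasure (a b : ℝ) : Measure ℝ :=
  volume.withDensity fun t =>
    if t ∈ Set.Ioo (0 : ℝ) 1 then
      ENNReal.ofReal (Real.Gamma (a + b) / (Real.Gamma a * Real.Gamma b)
        * t ^ (a - 1) * (1 - t) ^ (b - 1))
    else 0

/-- Binary Kullback–Leibler divergence `kl(p‖q)` as a real number (for `q ∈ (0,1)`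
this matches the standard conventions, since `Real.log 0 = 0` makes
`0·log(0/q) = 0` automatic). -/
noncomputable def klReal (p q : ℝ) : ℝ :=
  p * Real.log (p / q) + (1 - p) * Real.log ((1 - p) / (1 - q))

/-- The function `R(η) = ((u·b − (1−u)·(a−η))/b)·u^(−η) − 1`. -/
noncomputable def Rfun (a b u η : ℝ) : ℝ :=
  (u * b - (1 - u) * (a - η)) / b * u ^ (-η) - 1


lemma chordL2 (p b s η u : ℝ) (hp : 0 ≤ p) (hb : 0 < b) (hspb : s = p + b)
    (hη0 : 0 ≤ η) (hu0 : 0 < u) (hu1 : u < 1) (hxu : p / s < u)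
    (hq1 : s * u - p ≤ b * u ^ η) :
    ∀ t ∈ Set.Icc (p / s) u, u ^ η * (s * t - p) ≤ (s * u - p) * t ^ η := by
  have hs0 : 0 < s := by linarith
  have hx0 : (0:ℝ) ≤ p / s := div_nonneg hp hs0.le
  have hDu : 0 < s * u - p := by
    have := (div_lt_iff₀ hs0).1 hxu; linarith
  intro t ⟨htx, htu⟩
  have ht0 : 0 ≤ t := le_trans hx0 htx
  rcases eq_or_lt_of_le htu with rfl | htu'
  · exact le_of_eq (by ring)
  rcases le_or_gt η 1 with hle1 | hgt1
  · -- concave case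
    have hux : 0 < u - p / s := by linarith
    set θ : ℝ := (u - t) / (u - p / s) with hθ_def
    have hθ0 : 0 ≤ θ := div_nonneg (by linarith) hux.le
    have hθ1 : θ ≤ 1 := by
      rw [hθ_def, div_le_one hux]; linarith
    have h1 : θ * (u - p / s) = u - t := by
      rw [hθ_def]; exact div_mul_cancel₀ _ hux.ne'
    have hsx : s * (p / s) = p := by field_simp
    have hcomb : θ • (p / s) + (1 - θ) • u = t := by
      simp only [smul_eq_mul]; nlinarith [h1]
    have hconc := Real.concaveOn_rpow hη0 hle1
    have hkey := hconc.2 (Set.mem_Ici.2 hx0) (Set.mem_Ici.2 hu0.le) hθ0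
      (by linarith : (0:ℝ) ≤ 1 - θ) (by ring)
    rw [hcomb] at hkey
    simp only [smul_eq_mul] at hkey
    -- hkey : θ * (p/s)^η + (1-θ) * u^η ≤ t^η
    have hlin : s * t - p = (1 - θ) * (s * u - p) := by
      linear_combination s * h1 + θ * hsx
    have hlin' : u ^ η * (s * t - p) = (1 - θ) * ((s * u - p) * u ^ η) := by
      rw [hlin]; ring
    have h5 := mul_le_mul_of_nonneg_left hkey hDu.le
    have h6 : 0 ≤ θ * ((s * u - p) * (p / s) ^ η) :=
      mul_nonneg hθ0 (mul_nonneg hDu.le (Real.rpow_nonneg hx0 η))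
    nlinarith [h5, h6, hlin']
  · -- convex case
    have h1t : 0 < 1 - t := by linarith
    set θ : ℝ := (1 - u) / (1 - t) with hθ_def
    have hθ0 : 0 < θ := div_pos (by linarith) h1t
    have hθ1 : θ ≤ 1 := by rw [hθ_def, div_le_one h1t]; linarith
    have hcomb : θ • t + (1 - θ) • (1:ℝ) = u := by
      simp only [smul_eq_mul, hθ_def]; field_simp; ring
    have hconv := convexOn_rpow hgt1.le
    have hkey := hconv.2 (Set.mem_Ici.2 ht0) (Set.mem_Ici.2 (zero_le_one))
      hθ0.le (by linarith : (0:ℝ) ≤ 1 - θ) (by ring)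
    rw [hcomb] at hkey
    simp only [smul_eq_mul, Real.one_rpow, mul_one] at hkey
    -- hkey : u^η ≤ θ * t^η + (1-θ)
    have hlin : s * u - p = θ * (s * t - p) + (1 - θ) * b := by
      rw [← hcomb]; simp only [smul_eq_mul, hspb]; ring
    have hlin' : u ^ η * (s * u - p) = θ * (u ^ η * (s * t - p)) + (1 - θ) * (b * u ^ η) := by
      rw [hlin]; ring
    have h5 := mul_le_mul_of_nonneg_left hkey hDu.le
    have h7 : 0 ≤ (1 - θ) * (b * u ^ η - (s * u - p)) :=
      mul_nonneg (by linarith) (by linarith)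
    have h6 : θ * (u ^ η * (s * t - p)) ≤ θ * ((s * u - p) * t ^ η) := by
      nlinarith [h5, h7, hlin']
    exact le_of_mul_le_mul_left h6 hθ0

lemma chordL1 (p b s η u : ℝ) (hp : 0 ≤ p) (hb : 0 < b) (hspb : s = p + b)
    (hη0 : 0 ≤ η) (hu0 : 0 < u) (hu1 : u < 1) (hxu : p / s < u)
    (hq1 : s * u - p ≤ b * u ^ η) :
    ∀ t ∈ Set.Icc u 1, (s * u - p) * t ^ η ≤ u ^ η * (s * t - p) := by
  have hs0 : 0 < s := by linarith
  have hx0 : (0:ℝ) ≤ p / s := div_nonneg hp hs0.le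
  have hDu : 0 < s * u - p := by
    have := (div_lt_iff₀ hs0).1 hxu; linarith
  intro t ⟨htu, ht1⟩
  have ht0 : 0 < t := lt_of_lt_of_le hu0 htu
  have hDt : 0 < s * t - p := by nlinarith
  rcases eq_or_lt_of_le htu with rfl | htu'
  · exact le_of_eq (by ring)
  rcases le_or_gt η 1 with hle1 | hgt1
  · -- concave case: u = θ (p/s) + (1-θ) t
    have htx : 0 < t - p / s := by
      have := (div_lt_iff₀ hs0).1 hxu; nlinarith [(div_lt_iff₀ hs0).1 hxu]
    set θ : ℝ := (t - u) / (t - p / s) with hθ_def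
    have hθ0 : 0 ≤ θ := div_nonneg (by linarith) htx.le
    have hθ1 : θ ≤ 1 := by rw [hθ_def, div_le_one htx]; linarith [hxu]
    have h1 : θ * (t - p / s) = t - u := by
      rw [hθ_def]; exact div_mul_cancel₀ _ htx.ne'
    have hsx : s * (p / s) = p := by field_simp
    have hcomb : θ • (p / s) + (1 - θ) • t = u := by
      simp only [smul_eq_mul]; nlinarith [h1]
    have hconc := Real.concaveOn_rpow hη0 hle1
    have hkey := hconc.2 (Set.mem_Ici.2 hx0) (Set.mem_Ici.2 ht0.le) hθ0
      (by linarith : (0:ℝ) ≤ 1 - θ) (by ring)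
    rw [hcomb] at hkey
    simp only [smul_eq_mul] at hkey
    -- hkey : θ (p/s)^η + (1-θ) t^η ≤ u^η
    have hlin : s * u - p = (1 - θ) * (s * t - p) := by
      linear_combination s * h1 + θ * hsx
    have hlin' : (s * u - p) * t ^ η = (1 - θ) * ((s * t - p) * t ^ η) := by
      rw [hlin]; ring
    have h5 := mul_le_mul_of_nonneg_right hkey hDt.le
    have h6 : 0 ≤ θ * ((p / s) ^ η * (s * t - p)) :=
      mul_nonneg hθ0 (mul_nonneg (Real.rpow_nonneg hx0 η) hDt.le)
    nlinarith [h5, h6, hlin']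
  · -- convex case: t = θ u + (1-θ) 1
    have h1u : 0 < 1 - u := by linarith
    set θ : ℝ := (1 - t) / (1 - u) with hθ_def
    have hθ0 : 0 ≤ θ := div_nonneg (by linarith) h1u.le
    have hθ1 : θ ≤ 1 := by rw [hθ_def, div_le_one h1u]; linarith
    have hcomb : θ • u + (1 - θ) • (1:ℝ) = t := by
      simp only [smul_eq_mul, hθ_def]; field_simp; ring
    have hconv := convexOn_rpow hgt1.le
    have hkey := hconv.2 (Set.mem_Ici.2 hu0.le) (Set.mem_Ici.2 (zero_le_one))
      hθ0 (by linarith : (0:ℝ) ≤ 1 - θ) (by ring)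
    rw [hcomb] at hkey
    simp only [smul_eq_mul, Real.one_rpow, mul_one] at hkey
    -- hkey : t^η ≤ θ u^η + (1-θ)
    have hlin : s * t - p = θ * (s * u - p) + (1 - θ) * b := by
      rw [← hcomb]; simp only [smul_eq_mul, hspb]; ring
    have hlin' : u ^ η * (s * t - p) = θ * (u ^ η * (s * u - p)) + (1 - θ) * (b * u ^ η) := by
      rw [hlin]; ring
    have h5 := mul_le_mul_of_nonneg_left hkey hDu.le
    have h7 : 0 ≤ (1 - θ) * (b * u ^ η - (s * u - p)) :=
      mul_nonneg (by linarith) (by linarith)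
    nlinarith [h5, h7, hlin']


set_option maxHeartbeats 2000000

/-- **Beyond unit mass perturbation for the Beta distribution.** Let `a, b > 0`,
`u ∈ (0,1)`, let `η*` be the unique nonnegative root of `R`, and let
`η ∈ [0, min(a, η*)]`. Set `x = (a−η)/(a+b−η)` and assume `u > x`. Then for
`B ∼ Beta(a,b)`, `P(B ≥ u) ≤ P(B ≥ x)·exp(−(a+b−η)·kl(x‖u))`. -/
theorem stmt5 (a b : ℝ) (ha : 0 < a) (hb : 0 < b) (u : ℝ) (hu : u ∈ Set.Ioo (0 : ℝ) 1)
    (ηs : ℝ) (hηs0 : 0 ≤ ηs) (hηsroot : Rfun a b u ηs = 0)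
    (hηsuniq : ∀ η', 0 ≤ η' → Rfun a b u η' = 0 → η' = ηs)
    (η : ℝ) (hη : η ∈ Set.Icc (0 : ℝ) (min a ηs))
    (hxu : (a - η) / (a + b - η) < u) :
    betaMeasure a b {t : ℝ | u ≤ t}
      ≤ betaMeasure a b {t : ℝ | (a - η) / (a + b - η) ≤ t}
        * ENNReal.ofReal
            (Real.exp (-((a + b - η) * klReal ((a - η) / (a + b - η)) u))) := by
  obtain ⟨hu0, hu1⟩ := hu
  obtain ⟨hη0, hη2⟩ := hη
  have hηa : η ≤ a := le_trans hη2 (min_le_left _ _)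
  have hηηs : η ≤ ηs := le_trans hη2 (min_le_right _ _)
  set p : ℝ := a - η with hp_def
  set s : ℝ := a + b - η with hs_def
  have hp0 : 0 ≤ p := by rw [hp_def]; linarith
  have hspb : s = p + b := by rw [hs_def, hp_def]; ring
  have hs0 : 0 < s := by linarith
  set xx : ℝ := p / s with hxx_def
  have hx0 : 0 ≤ xx := div_nonneg hp0 hs0.le
  have hxu' : xx < u := hxu
  have hx1 : xx < 1 := lt_trans hxu' hu1
  have hxs : s * xx = p := by rw [hxx_def]; field_simp
  have hDu : 0 < s * u - p := by
    have := (div_lt_iff₀ hs0).1 hxu'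
    linarith
  -- R(η) ≤ 0 on [0, ηs]
  have hRle : Rfun a b u η ≤ 0 := by
    by_contra hpos
    push_neg at hpos
    have hR0 : Rfun a b u 0 < 0 := by
      have h1 : u ^ (-(0:ℝ)) = 1 := by norm_num
      have h2 : (u * b - (1 - u) * (a - 0)) / b < 1 := by
        rw [div_lt_one hb]
        nlinarith
      unfold Rfun
      rw [h1]
      linarith
    have hcont : ContinuousOn (Rfun a b u) (Set.Icc 0 η) := by
      have hfun : Rfun a b u = fun η' => (u * b - (1 - u) * (a - η')) / b *
          Real.exp (Real.log u * (-η')) - 1 := by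
        funext η'
        rw [Rfun, Real.rpow_def_of_pos hu0]
      rw [hfun]
      fun_prop
    obtain ⟨c, hc, hc0⟩ := intermediate_value_Icc hη0 hcont ⟨hR0.le, hpos.le⟩
    have hcηs : c = ηs := hηsuniq c hc.1 hc0
    have : η = ηs := le_antisymm hηηs (hcηs ▸ hc.2)
    rw [this, hηsroot] at hpos
    exact lt_irrefl _ hpos
  have hq1 : s * u - p ≤ b * u ^ η := by
    have hupos : (0:ℝ) < u ^ η := Real.rpow_pos_of_pos hu0 _
    have hneg : u ^ (-η) = (u ^ η)⁻¹ := Real.rpow_neg hu0.le η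
    rw [Rfun, hneg, ← hp_def] at hRle
    have h1 : (u * b - (1 - u) * p) / b * (u ^ η)⁻¹ ≤ 1 := by linarith
    rw [div_mul_eq_mul_div, div_le_one hb, ← div_eq_mul_inv, div_le_iff₀ hupos] at h1
    nlinarith [h1]
  -- the functions ψ and φ
  set ψ : ℝ → ℝ := fun t => t ^ p * (1 - t) ^ b with hψ_def
  set φ : ℝ → ℝ := fun t => (1 - t) ^ (b - 1) * (t ^ (p - 1) * (s * t - p)) with hφ_def
  have hψc : Continuous ψ := by
    apply Continuous.mul
    · exact Real.continuous_rpow_const hp0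
    · exact (Real.continuous_rpow_const hb.le).comp (continuous_const.sub continuous_id)
  have hderiv : ∀ t ∈ Ioo (0:ℝ) 1, HasDerivAt (fun z => -ψ z) (φ t) t := by
    intro t ⟨ht0, ht1⟩
    have h1t : (0:ℝ) < 1 - t := by linarith
    have hd1 : HasDerivAt (fun z : ℝ => z ^ p) (p * t ^ (p - 1)) t :=
      Real.hasDerivAt_rpow_const (Or.inl (ne_of_gt ht0))
    have hd0 : HasDerivAt (fun z : ℝ => 1 - z) (-1) t := by
      simpa using (hasDerivAt_id t).const_sub (1:ℝ)
    have hd2 := hd0.rpow_const (p := b) (Or.inl (ne_of_gt h1t))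
    have hd3 := (hd1.mul hd2).neg
    have e1 : t ^ p = t ^ (p - 1) * t := by
      rw [← Real.rpow_add_one (ne_of_gt ht0) (p - 1)]; ring_nf
    have e2 : (1 - t) ^ b = (1 - t) ^ (b - 1) * (1 - t) := by
      rw [← Real.rpow_add_one (ne_of_gt h1t) (b - 1)]; ring_nf
    refine (hd3 : HasDerivAt (fun z => -ψ z) _ t).congr_deriv ?_
    rw [hφ_def]
    simp only
    rw [e1, e2, hspb]
    ring
  have hφmeas : Measurable φ := by
    rw [hφ_def]
    exact ((measurable_const.sub measurable_id).pow_const (b-1)).mul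
      ((measurable_id.pow_const (p-1)).mul ((measurable_id.const_mul s).sub_const p))
  have hIb : ∀ v w : ℝ, IntervalIntegrable (fun t : ℝ => (1 - t) ^ (b - 1)) volume v w := by
    intro v w
    have h := (intervalIntegral.intervalIntegrable_rpow' (by linarith : (-1:ℝ) < b - 1)
      (a := 1 - v) (b := 1 - w)).comp_sub_left 1
    simpa using h
  have hint1 : IntervalIntegrable φ volume u 1 := by
    apply (hIb u 1).mul_continuousOn
    intro t ht
    rw [uIcc_of_le hu1.le] at ht
    have ht0 : t ≠ 0 := by have := ht.1; intro h; rw [h] at this; linarith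
    exact ((Real.continuousAt_rpow_const t (p-1) (Or.inl ht0)).mul
      (by fun_prop)).continuousWithinAt
  have hint2 : IntervalIntegrable φ volume xx u := by
    rcases eq_or_lt_of_le hp0 with hp0' | hp0'
    · -- p = 0, xx = 0
      have hxx : xx = 0 := by nlinarith
      rw [intervalIntegrable_iff_integrableOn_Ioc_of_le (by linarith)]
      have base : IntegrableOn (fun t : ℝ => s * (1 - t) ^ (b - 1)) (Ioc xx u) volume := by
        rw [← intervalIntegrable_iff_integrableOn_Ioc_of_le (le_of_lt hxu')]
        exact (hIb xx u).const_mul s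
      apply base.congr_fun _ measurableSet_Ioc
      intro t ht
      rw [hφ_def]
      simp only
      rw [← hp0']
      have ht0 : (0:ℝ) < t := by rw [hxx] at ht; exact ht.1
      rw [show (0:ℝ) - 1 = -1 by norm_num, Real.rpow_neg_one]
      field_simp
      ring
    · -- p > 0, xx > 0
      have hxx : 0 < xx := by rw [hxx_def]; positivity
      apply ContinuousOn.intervalIntegrable
      intro t ht
      rw [uIcc_of_le hxu'.le] at ht
      have ht0 : t ≠ 0 := by intro h; rw [h] at ht; exact absurd ht.1 (by linarith)
      have hc1 : ContinuousAt (fun t : ℝ => (1 - t) ^ (b - 1)) t := by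
        apply ContinuousAt.comp (Real.continuousAt_rpow_const (1 - t) (b - 1)
          (Or.inl (by intro h; have := ht.2; nlinarith [ht.2])))
        fun_prop
      exact hc1.continuousWithinAt.mul
        (((Real.continuousAt_rpow_const t (p-1) (Or.inl ht0)).mul (by fun_prop)).continuousWithinAt)
  -- FTC evaluations
  have hψ1 : ψ 1 = 0 := by
    rw [hψ_def]; simp [Real.zero_rpow (ne_of_gt hb)]
  have hFTC1 : ∫ t in u..1, φ t = ψ u := by
    have h := integral_eq_sub_of_hasDerivAt_of_le hu1.le (hψc.neg.continuousOn)
      (fun t ht => hderiv t ⟨lt_trans hu0 ht.1, ht.2⟩) hint1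
    rw [h]; simp only [Pi.neg_apply, hψ1]; ring
  have hFTC2 : ∫ t in xx..u, φ t = ψ xx - ψ u := by
    have h := integral_eq_sub_of_hasDerivAt_of_le hxu'.le (hψc.neg.continuousOn)
      (fun t ht => hderiv t ⟨lt_of_le_of_lt hx0 ht.1, lt_trans ht.2 hu1⟩) hint2
    rw [h]; simp only [Pi.neg_apply]; ring
  have hφnonneg : ∀ t ∈ Icc xx 1, 0 ≤ φ t := by
    intro t ⟨ht1, ht2⟩
    rw [hφ_def]
    have h1 : (0:ℝ) ≤ 1 - t := by linarith
    have h2 : (0:ℝ) ≤ t := le_trans hx0 ht1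
    have h3 : 0 ≤ s * t - p := by nlinarith
    positivity
  have hψu_pos : 0 < ψ u := by
    rw [hψ_def]
    exact mul_pos (Real.rpow_pos_of_pos hu0 p) (Real.rpow_pos_of_pos (by linarith) b)
  have hψx_pos : 0 < ψ xx := by
    rcases eq_or_lt_of_le hp0 with hp0' | hp0'
    · have hxx0 : xx = 0 := by nlinarith
      rw [hψ_def, hxx0, ← hp0']
      norm_num
    · have hxx0 : 0 < xx := by rw [hxx_def]; positivity
      rw [hψ_def]
      exact mul_pos (Real.rpow_pos_of_pos hxx0 p) (Real.rpow_pos_of_pos (by linarith) b)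
  have hψxu : ψ u ≤ ψ xx := by
    have h := intervalIntegral.integral_nonneg (μ := volume) hxu'.le (fun t ht =>
      hφnonneg t ⟨ht.1, le_trans ht.2 hu1.le⟩)
    rw [hFTC2] at h; linarith
  -- the exponential identity
  have hK : Real.exp (-(s * klReal xx u)) = ψ u / ψ xx := by
    have h1u : (0:ℝ) < 1 - u := by linarith
    have h1x : (0:ℝ) < 1 - xx := by linarith
    have hsx1 : s * (1 - xx) = b := by rw [hspb] at hxs ⊢; linarith
    rcases eq_or_lt_of_le hp0 with hp0' | hp0'
    · have hxx0 : xx = 0 := by nlinarith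
      have hsb : s = b := by rw [hspb, ← hp0']; ring
      have hkl : klReal xx u = Real.log (1 / (1 - u)) := by
        rw [klReal, hxx0]; norm_num
      rw [hkl, hψ_def, hxx0, ← hp0', hsb]
      simp only [Real.rpow_zero, one_mul, sub_zero, Real.one_rpow]
      rw [one_div, Real.log_inv]
      rw [show -(b * -Real.log (1 - u)) = b * Real.log (1 - u) by ring]
      rw [Real.rpow_def_of_pos h1u]
      rw [mul_comm]
      norm_num
    · have hxx0 : 0 < xx := by rw [hxx_def]; positivity
      have hlog : -(s * klReal xx u) =
          (Real.log u * p - Real.log xx * p) + (Real.log (1 - u) * b - Real.log (1 - xx) * b) := by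
        rw [klReal, Real.log_div (ne_of_gt hxx0) (ne_of_gt hu0),
          Real.log_div (ne_of_gt h1x) (ne_of_gt h1u)]
        linear_combination (Real.log u - Real.log xx) * hxs +
          (Real.log (1 - u) - Real.log (1 - xx)) * hsx1
      rw [hlog, Real.exp_add, Real.exp_sub, Real.exp_sub,
        ← Real.rpow_def_of_pos hu0, ← Real.rpow_def_of_pos hxx0,
        ← Real.rpow_def_of_pos h1u, ← Real.rpow_def_of_pos h1x, hψ_def]
      rw [div_mul_div_comm]
  -- pointwise density comparisons
  set C : ℝ := Real.Gamma (a + b) / (Real.Gamma a * Real.Gamma b) with hC_def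
  have hC : 0 < C := by
    apply div_pos (Real.Gamma_pos_of_pos (by linarith))
    exact mul_pos (Real.Gamma_pos_of_pos ha) (Real.Gamma_pos_of_pos hb)
  set W : ℝ := u ^ η / (s * u - p) with hW_def
  have hW : 0 < W := div_pos (Real.rpow_pos_of_pos hu0 η) hDu
  have hL1 := chordL1 p b s η u hp0 hb hspb hη0 hu0 hu1 (hxx_def ▸ hxu') hq1
  have hL2 := chordL2 p b s η u hp0 hb hspb hη0 hu0 hu1 (hxx_def ▸ hxu') hq1
  have hexp : ∀ t : ℝ, 0 < t → t ^ (a - 1) = t ^ η * t ^ (p - 1) := by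
    intro t ht0
    rw [← Real.rpow_add ht0]
    congr 1
    rw [hp_def]; ring
  have hg1 : ∀ t ∈ Ioo u 1, C * t ^ (a - 1) * (1 - t) ^ (b - 1) ≤ C * W * φ t := by
    intro t ht
    have ht0 : 0 < t := lt_trans hu0 ht.1
    have hch := hL1 t ⟨ht.1.le, ht.2.le⟩
    have key : t ^ η ≤ W * (s * t - p) := by
      rw [hW_def, div_mul_eq_mul_div, le_div_iff₀ hDu]
      nlinarith [hch]
    have hnn : 0 ≤ C * t ^ (p - 1) * (1 - t) ^ (b - 1) :=
      mul_nonneg (mul_nonneg hC.le (Real.rpow_nonneg ht0.le _))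
        (Real.rpow_nonneg (by linarith [ht.2]) _)
    have h2 := mul_le_mul_of_nonneg_left key hnn
    rw [hexp t ht0, hφ_def]
    simp only
    nlinarith [h2]
  have hg2 : ∀ t ∈ Ioo xx u, C * W * φ t ≤ C * t ^ (a - 1) * (1 - t) ^ (b - 1) := by
    intro t ht
    have ht0 : 0 < t := lt_of_le_of_lt hx0 ht.1
    have hch := hL2 t ⟨ht.1.le, ht.2.le⟩
    have key : W * (s * t - p) ≤ t ^ η := by
      rw [hW_def, div_mul_eq_mul_div, div_le_iff₀ hDu]
      nlinarith [hch]
    have hnn : 0 ≤ C * t ^ (p - 1) * (1 - t) ^ (b - 1) :=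
      mul_nonneg (mul_nonneg hC.le (Real.rpow_nonneg ht0.le _))
        (Real.rpow_nonneg (by linarith [lt_trans ht.2 hu1]) _)
    have h2 := mul_le_mul_of_nonneg_left key hnn
    rw [hexp t ht0, hφ_def]
    simp only
    nlinarith [h2]
  -- measure-theoretic part
  set g : ℝ → ℝ≥0∞ := fun t => ENNReal.ofReal (C * t ^ (a - 1) * (1 - t) ^ (b - 1)) with hg_def
  have hgmeas : Measurable g := by
    apply Measurable.ennreal_ofReal
    exact ((measurable_id.pow_const (a-1)).const_mul C).mul
      ((measurable_const.sub measurable_id).pow_const (b-1))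
  have hrepr : ∀ v : ℝ, betaMeasure a b {t : ℝ | v ≤ t}
      = ∫⁻ t in Ioo (0:ℝ) 1 ∩ Ici v, g t := by
    intro v
    have hset : {t : ℝ | v ≤ t} = Ici v := rfl
    rw [hset, betaMeasure, withDensity_apply _ measurableSet_Ici]
    have hind : (fun t => if t ∈ Set.Ioo (0 : ℝ) 1 then
        ENNReal.ofReal (Real.Gamma (a + b) / (Real.Gamma a * Real.Gamma b)
        * t ^ (a - 1) * (1 - t) ^ (b - 1)) else 0) = (Ioo (0:ℝ) 1).indicator g := by
      funext t
      rw [Set.indicator_apply]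
    rw [hind, lintegral_indicator measurableSet_Ioo, Measure.restrict_restrict measurableSet_Ioo]
  have hIciu : Ioo (0:ℝ) 1 ∩ Ici u = Ico u 1 := by
    ext t
    simp only [Set.mem_inter_iff, Set.mem_Ioo, Set.mem_Ici, Set.mem_Ico]
    constructor
    · rintro ⟨⟨_, h2⟩, h3⟩; exact ⟨h3, h2⟩
    · rintro ⟨h1, h2⟩; exact ⟨⟨lt_of_lt_of_le hu0 h1, h2⟩, h1⟩
  have hArepr : betaMeasure a b {t : ℝ | u ≤ t} = ∫⁻ t in Ioo u 1, g t := by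
    rw [hrepr u, hIciu, setLIntegral_congr (Ioo_ae_eq_Ico (a := u) (b := 1)).symm]
  have hIntCWφ1 : IntegrableOn (fun t => C * W * φ t) (Ioo u 1) volume :=
    (((intervalIntegrable_iff_integrableOn_Ioc_of_le hu1.le).1 hint1).mono_set
      Ioo_subset_Ioc_self).const_mul (C * W)
  have hA_ub : betaMeasure a b {t : ℝ | u ≤ t} ≤ ENNReal.ofReal (C * W * ψ u) := by
    rw [hArepr]
    calc ∫⁻ t in Ioo u 1, g t
        ≤ ∫⁻ t in Ioo u 1, ENNReal.ofReal (C * W * φ t) := by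
          apply setLIntegral_mono ((hφmeas.const_mul (C * W)).ennreal_ofReal)
          intro t ht
          exact ENNReal.ofReal_le_ofReal (hg1 t ht)
      _ = ENNReal.ofReal (∫ t in Ioo u 1, C * W * φ t) := by
          rw [ofReal_integral_eq_lintegral_ofReal hIntCWφ1]
          exact (ae_restrict_iff' measurableSet_Ioo).2 (ae_of_all _ fun t ht =>
            mul_nonneg (mul_nonneg hC.le hW.le) (hφnonneg t ⟨(hxu'.trans ht.1).le, ht.2.le⟩))
      _ = ENNReal.ofReal (C * W * ψ u) := by
          rw [← integral_Ioc_eq_integral_Ioo, ← intervalIntegral.integral_of_le hu1.le,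
            intervalIntegral.integral_const_mul, hFTC1]
  have hBsplit : betaMeasure a b {t : ℝ | xx ≤ t}
      ≥ (∫⁻ t in Ioo xx u, g t) + betaMeasure a b {t : ℝ | u ≤ t} := by
    rw [hrepr xx, hArepr, ge_iff_le]
    have hsub : Ioo xx u ∪ Ico u 1 ⊆ Ioo (0:ℝ) 1 ∩ Ici xx := by
      rintro t (⟨h1, h2⟩ | ⟨h1, h2⟩)
      · exact ⟨⟨lt_of_le_of_lt hx0 h1, lt_trans h2 hu1⟩, h1.le⟩
      · exact ⟨⟨lt_of_lt_of_le hu0 h1, h2⟩, le_trans hxu'.le h1⟩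
    calc (∫⁻ t in Ioo xx u, g t) + ∫⁻ t in Ioo u 1, g t
        = (∫⁻ t in Ioo xx u, g t) + ∫⁻ t in Ico u 1, g t := by
          rw [setLIntegral_congr (Ioo_ae_eq_Ico (a := u) (b := 1))]
      _ = ∫⁻ t in Ioo xx u ∪ Ico u 1, g t := by
          rw [lintegral_union measurableSet_Ico
            (Set.disjoint_left.mpr fun t ht ht' => lt_irrefl u (lt_of_le_of_lt ht'.1 ht.2))]
      _ ≤ ∫⁻ t in Ioo (0:ℝ) 1 ∩ Ici xx, g t := lintegral_mono_set hsub
  have hIntCWφ2 : IntegrableOn (fun t => C * W * φ t) (Ioo xx u) volume :=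
    (((intervalIntegrable_iff_integrableOn_Ioc_of_le hxu'.le).1 hint2).mono_set
      Ioo_subset_Ioc_self).const_mul (C * W)
  have hB_lb : (∫⁻ t in Ioo xx u, g t) ≥ ENNReal.ofReal (C * W * (ψ xx - ψ u)) := by
    calc ∫⁻ t in Ioo xx u, g t
        ≥ ∫⁻ t in Ioo xx u, ENNReal.ofReal (C * W * φ t) := by
          apply setLIntegral_mono hgmeas
          intro t ht
          exact ENNReal.ofReal_le_ofReal (hg2 t ht)
      _ = ENNReal.ofReal (∫ t in Ioo xx u, C * W * φ t) := by
          rw [ofReal_integral_eq_lintegral_ofReal hIntCWφ2]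
          exact (ae_restrict_iff' measurableSet_Ioo).2 (ae_of_all _ fun t ht =>
            mul_nonneg (mul_nonneg hC.le hW.le) (hφnonneg t ⟨ht.1.le, by linarith [ht.2]⟩))
      _ = ENNReal.ofReal (C * W * (ψ xx - ψ u)) := by
          rw [← integral_Ioc_eq_integral_Ioo, ← intervalIntegral.integral_of_le hxu'.le,
            intervalIntegral.integral_const_mul, hFTC2]
  -- final assembly
  set A := betaMeasure a b {t : ℝ | u ≤ t} with hA_def
  have hAfin : A ≠ ⊤ := (lt_of_le_of_lt hA_ub ENNReal.ofReal_lt_top).ne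
  set α : ℝ := A.toReal with hα_def
  have hα0 : 0 ≤ α := ENNReal.toReal_nonneg
  have hAα : A = ENNReal.ofReal α := (ENNReal.ofReal_toReal hAfin).symm
  have hαm : α ≤ C * W * ψ u :=
    ENNReal.toReal_le_of_le_ofReal (by positivity) hA_ub
  have hreal : α ≤ (C * W * (ψ xx - ψ u) + α) * Real.exp (-(s * klReal xx u)) := by
    rw [hK, ← mul_div_assoc, le_div_iff₀ hψx_pos]
    have hint := mul_le_mul_of_nonneg_right hαm (sub_nonneg.2 hψxu)
    nlinarith [hint]
  have hl0 : 0 ≤ C * W * (ψ xx - ψ u) :=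
    mul_nonneg (mul_nonneg hC.le hW.le) (sub_nonneg.2 hψxu)
  calc A = ENNReal.ofReal α := hAα
    _ ≤ ENNReal.ofReal ((C * W * (ψ xx - ψ u) + α) * Real.exp (-(s * klReal xx u))) :=
        ENNReal.ofReal_le_ofReal hreal
    _ = ENNReal.ofReal (C * W * (ψ xx - ψ u) + α)
          * ENNReal.ofReal (Real.exp (-(s * klReal xx u))) := by
        rw [ENNReal.ofReal_mul (add_nonneg hl0 hα0)]
    _ ≤ betaMeasure a b {t : ℝ | xx ≤ t} * ENNReal.ofReal (Real.exp (-(s * klReal xx u))) := by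
        apply mul_le_mul_left
        rw [ENNReal.ofReal_add hl0 hα0, ← hAα]
        exact le_trans (add_le_add_left hB_lb A) hBsplit
end

section
/- Let a, b > 0 and u ∈ (0,1), define R(η) = ((u·b − (1−u)·(a−η))/b)·u^{−η} − 1, and let η* be the unique root of R in [0,∞). Then R(η) ≤ 0 for every η ∈ [0, η*]. -/
lemma Rfun_continuous (a b u : ℝ) (hu : 0 < u) :
    Continuous (fun η => Rfun a b u η) := by
  unfold Rfun
  have h1 : Continuous (fun η : ℝ => u ^ (-η)) :=
    continuous_const.rpow continuous_neg (fun x => Or.inl hu.ne')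
  fun_prop

/-- **Sign of `R` below its root.** For `a, b > 0`, `u ∈ (0,1)`, if `η*` is the
unique root of `R` in `[0, ∞)`, then `R(η) ≤ 0` for every `η ∈ [0, η*]`. -/
theorem stmt8 (a b : ℝ) (ha : 0 < a) (hb : 0 < b) (u : ℝ) (hu : u ∈ Set.Ioo (0 : ℝ) 1)
    (ηs : ℝ) (hηs0 : 0 ≤ ηs) (hηsroot : Rfun a b u ηs = 0)
    (hηsuniq : ∀ η', 0 ≤ η' → Rfun a b u η' = 0 → η' = ηs) :
    ∀ η ∈ Set.Icc (0 : ℝ) ηs, Rfun a b u η ≤ 0 := by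
  obtain ⟨hu0, hu1⟩ := hu
  have hR0 : Rfun a b u 0 < 0 := by
    have : Rfun a b u 0 = (u * b - (1 - u) * a) / b - 1 := by
      simp [Rfun]
    rw [this]
    have hnum : u * b - (1 - u) * a < b := by nlinarith
    have := (div_lt_one hb).mpr hnum
    linarith
  intro η hη
  obtain ⟨hη0, hηs'⟩ := hη
  by_contra hpos
  push_neg at hpos
  have hηne : η ≠ ηs := fun h => by rw [h, hηsroot] at hpos; linarith
  have hηlt : η < ηs := lt_of_le_of_ne hηs' hηne
  have hcont : ContinuousOn (fun x => Rfun a b u x) (Set.Icc 0 η) :=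
    (Rfun_continuous a b u hu0).continuousOn
  obtain ⟨c, hc, hcroot⟩ := intermediate_value_Icc hη0 hcont
    (Set.mem_Icc.mpr ⟨hR0.le, hpos.le⟩)
  have := hηsuniq c hc.1 hcroot
  linarith [hc.2]
end

section
/- Let a, b > 0 and u ∈ (0,1), define R(η) = ((u·b − (1−u)·(a−η))/b)·u^{−η} − 1, and let η* be the unique root of R in [0,∞). Then η* ≤ a if and only if a ≥ 1. -/
/-- **Comparison of the root with `a`.** For `a, b > 0`, `u ∈ (0,1)`, if `η*` is
the unique root of `R` in `[0, ∞)`, then `η* ≤ a` if and only if `a ≥ 1`. -/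
theorem stmt9 (a b : ℝ) (ha : 0 < a) (hb : 0 < b) (u : ℝ) (hu : u ∈ Set.Ioo (0 : ℝ) 1)
    (ηs : ℝ) (hηs0 : 0 ≤ ηs) (hηsroot : Rfun a b u ηs = 0)
    (hηsuniq : ∀ η', 0 ≤ η' → Rfun a b u η' = 0 → η' = ηs) :
    ηs ≤ a ↔ 1 ≤ a := by
  obtain ⟨hu0, hu1⟩ := hu
  have hcont : Continuous (Rfun a b u) := by
    unfold Rfun
    have hc1 : Continuous fun η : ℝ => (u * b - (1 - u) * (a - η)) / b := by continuity
    have hc2 : Continuous fun η : ℝ => u ^ (-η) :=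
      Continuous.rpow continuous_const continuous_neg fun _ => Or.inl hu0.ne'
    exact (hc1.mul hc2).sub continuous_const
  have hRa : Rfun a b u a = u ^ ((1:ℝ) - a) - 1 := by
    unfold Rfun
    rw [show (1:ℝ) - a = 1 + (-a) by ring, Real.rpow_add hu0, Real.rpow_one]
    field_simp
    ring
  have hR0 : Rfun a b u 0 < 0 := by
    unfold Rfun
    rw [neg_zero, Real.rpow_zero, mul_one]
    have h1 : u * b - (1 - u) * (a - 0) < b := by nlinarith
    have := (div_lt_one hb).mpr h1
    linarith
  constructor
  · -- ηs ≤ a → 1 ≤ a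
    intro hle
    by_contra hna
    push_neg at hna
    have hRaneg : Rfun a b u a < 0 := by
      rw [hRa]
      have : u ^ ((1:ℝ) - a) < 1 := Real.rpow_lt_one hu0.le hu1 (by linarith)
      linarith
    set N : ℝ := a + b / (1 - u) with hN
    have hu1' : 0 < 1 - u := by linarith
    have haN : a ≤ N := by
      rw [hN]; linarith [div_pos hb hu1']
    have hNpos : 0 < N := lt_of_lt_of_le ha haN
    have hRN : Rfun a b u N = (u + 1) * u ^ (-N) - 1 := by
      unfold Rfun
      have : (u * b - (1 - u) * (a - N)) / b = u + 1 := by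
        rw [hN]; field_simp; ring
      rw [this]
    have hRNpos : 0 < Rfun a b u N := by
      rw [hRN]
      have h2 : 1 < u ^ (-N) := by
        rw [Real.one_lt_rpow_iff_of_pos hu0]
        exact Or.inr ⟨hu1, neg_neg_of_pos hNpos⟩
      nlinarith
    have := intermediate_value_Icc haN hcont.continuousOn
    have h0mem : (0:ℝ) ∈ Set.Icc (Rfun a b u a) (Rfun a b u N) :=
      ⟨hRaneg.le, hRNpos.le⟩
    obtain ⟨η', hη'mem, hη'root⟩ := this h0mem
    have hη'eq : η' = ηs := hηsuniq η' (le_trans ha.le hη'mem.1) hη'root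
    have : ηs = a := le_antisymm hle (hη'eq ▸ hη'mem.1)
    rw [this] at hηsroot
    linarith [hηsroot, hRaneg]
  · -- 1 ≤ a → ηs ≤ a
    intro h1a
    have hRanng : 0 ≤ Rfun a b u a := by
      rw [hRa]
      have : 1 ≤ u ^ ((1:ℝ) - a) :=
        Real.one_le_rpow_of_pos_of_le_one_of_nonpos hu0 hu1.le (by linarith)
      linarith
    have h0a : (0:ℝ) ≤ a := ha.le
    have := intermediate_value_Icc h0a hcont.continuousOn
    have h0mem : (0:ℝ) ∈ Set.Icc (Rfun a b u 0) (Rfun a b u a) := ⟨hR0.le, hRanng⟩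
    obtain ⟨η', hη'mem, hη'root⟩ := this h0mem
    have hη'eq : η' = ηs := hηsuniq η' hη'mem.1 hη'root
    exact hη'eq ▸ hη'mem.2
end

section
/- Let a ≥ 1, b > 0 and u ∈ (0,1), define R(η) = ((u·b − (1−u)·(a−η))/b)·u^{−η} − 1, and let η* be the unique root of R in [0,∞). Define S_2 = a − b·(b·log(1/u) + 1/u − 1)·(√(1 + 2·(1/u − 1)²·log(1/u)·(a−1)/(b·log(1/u) + 1/u − 1)²) − 1)/(1/u − 1)², S_1 = a − b·(a−1)/(b + (1/u − 1)/log(1/u)), and S_0 = a − b·(a−1)/(b+1). Then η* ≥ S_2 ≥ S_1 ≥ S_0 ≥ 0. -/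
/-- `S_2(a,b,u)`. -/
noncomputable def S2 (a b u : ℝ) : ℝ :=
  a - b * (b * Real.log (1 / u) + 1 / u - 1)
      * (Real.sqrt (1 + 2 * (1 / u - 1) ^ 2 * Real.log (1 / u) * (a - 1)
          / (b * Real.log (1 / u) + 1 / u - 1) ^ 2) - 1)
      / (1 / u - 1) ^ 2

/-- `S_1(a,b,u)`. -/
noncomputable def S1 (a b u : ℝ) : ℝ :=
  a - b * (a - 1) / (b + (1 / u - 1) / Real.log (1 / u))

/-- `S_0(a,b)`. -/
noncomputable def S0 (a b : ℝ) : ℝ := a - b * (a - 1) / (b + 1)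

lemma exp_quad_aux (x : ℝ) (hx : 0 ≤ x) :
    (1 - Real.exp (-x)) + (1 - Real.exp (-x))^2 / 2 ≤ x := by
  set G : ℝ → ℝ := fun s => s - 3/2 + 2*Real.exp (-s) - Real.exp (-2*s)/2 with hG
  have key : ∀ y : ℝ, HasDerivAt G (1 - 2*Real.exp (-y) + Real.exp (-2*y)) y := by
    intro y
    have h1 : HasDerivAt (fun s : ℝ => Real.exp (-s)) (-Real.exp (-y)) y := by
      exact ((Real.hasDerivAt_exp (-y)).comp y ((hasDerivAt_id y).neg)).congr_deriv (by ring)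
    have h2 : HasDerivAt (fun s : ℝ => Real.exp (-2*s)) (-2*Real.exp (-2*y)) y := by
      have hlin : HasDerivAt (fun s : ℝ => -2*s) (-2 : ℝ) y := by
        simpa using (hasDerivAt_id y).const_mul (-2 : ℝ)
      have h := (Real.hasDerivAt_exp (-2*y)).comp y hlin
      simp only [Function.comp_def] at h
      exact h.congr_deriv (by ring)
    have := (((hasDerivAt_id y).sub_const (3/2)).add (h1.const_mul 2)).sub (h2.div_const 2)
    exact this.congr_deriv (by ring)
  have hmono : Monotone G := by
    apply monotone_of_deriv_nonneg (fun y => (key y).differentiableAt)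
    intro y
    rw [(key y).deriv]
    have he : Real.exp (-2*y) = Real.exp (-y)^2 := by
      rw [sq, ← Real.exp_add]; ring_nf
    nlinarith [sq_nonneg (1 - Real.exp (-y))]
  have h0 : G 0 = 0 := by simp [hG]; norm_num
  have := hmono hx
  rw [h0] at this
  have he : Real.exp (-2*x) = Real.exp (-x)^2 := by
    rw [sq, ← Real.exp_add]; ring_nf
  simp only [hG] at this
  nlinarith [this]

lemma log_quad_aux {z : ℝ} (hz : 0 < z) (hz1 : z ≤ 1) :
    (1 - z) + (1 - z)^2 / 2 ≤ -Real.log z := by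
  have hx : 0 ≤ -Real.log z := by
    have := Real.log_nonpos hz.le hz1
    linarith
  have hzx : Real.exp (-(-Real.log z)) = z := by
    rw [neg_neg, Real.exp_log hz]
  have := exp_quad_aux (-Real.log z) hx
  rw [hzx] at this
  exact this


set_option maxHeartbeats 1000000 in
/-- **Lower bounds on the root `η*` when `a ≥ 1`.** For `a ≥ 1`, `b > 0`,
`u ∈ (0,1)`, if `η*` is the unique root of `R` in `[0, ∞)`, then
`η* ≥ S_2 ≥ S_1 ≥ S_0 ≥ 0`. -/
theorem stmt10 (a b : ℝ) (ha : 1 ≤ a) (hb : 0 < b) (u : ℝ) (hu : u ∈ Set.Ioo (0 : ℝ) 1)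
    (ηs : ℝ) (hηs0 : 0 ≤ ηs) (hηsroot : Rfun a b u ηs = 0)
    (hηsuniq : ∀ η', 0 ≤ η' → Rfun a b u η' = 0 → η' = ηs) :
    S2 a b u ≤ ηs ∧ S1 a b u ≤ S2 a b u ∧ S0 a b ≤ S1 a b u ∧ 0 ≤ S0 a b := by
  clear hηsuniq
  obtain ⟨hu0, hu1⟩ := hu
  have hu1' : (1:ℝ) < 1/u := by rw [lt_div_iff₀ hu0]; linarith
  have hu0' : (0:ℝ) < 1/u := lt_trans one_pos hu1'
  have hL : 0 < Real.log (1/u) := Real.log_pos hu1'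
  simp only [S2, S1, S0]
  rw [show b * Real.log (1/u) + 1/u - 1 = b * Real.log (1/u) + (1/u - 1) by ring]
  set L := Real.log (1/u) with hLdef
  set c := 1/u - 1 with hcdef
  have hc : 0 < c := by rw [hcdef]; linarith
  have hcL : L ≤ c := by
    have := Real.log_le_sub_one_of_pos hu0'
    rw [hcdef]; linarith
  have hlogu : Real.log u = -L := by
    rw [hLdef, one_div, Real.log_inv, neg_neg]
  set z : ℝ := u ^ (ηs - 1 : ℝ) with hzdef
  have hz : 0 < z := Real.rpow_pos_of_pos hu0 _
  have hup : (0:ℝ) < u ^ (ηs : ℝ) := Real.rpow_pos_of_pos hu0 _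
  have hzz : u ^ (ηs : ℝ) = u * z := by
    rw [hzdef]
    rw [show u * u ^ (ηs - 1 : ℝ) = u ^ (1:ℝ) * u ^ (ηs - 1 : ℝ) by rw [Real.rpow_one],
      ← Real.rpow_add hu0]
    norm_num
  have h2 : u*b - (1-u)*(a-ηs) = b * (u * z) := by
    have h1 : (u * b - (1 - u) * (a - ηs)) / b * u ^ (-ηs) = 1 := by
      rw [Rfun] at hηsroot; linarith
    rw [Real.rpow_neg hu0.le, hzz] at h1
    field_simp at h1
    linarith
  have key : c * (a - ηs) = b * (1 - z) := by
    rw [hcdef]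
    field_simp
    nlinarith [h2]
  have hlogz : Real.log z = -((ηs - 1) * L) := by
    rw [hzdef, Real.log_rpow hu0, hlogu]; ring
  set D := b*L + c with hDdef
  set t := 2*c^2*L*(a-1)/D^2 with htdef
  clear_value L c D t z
  clear hzz hup hlogu hzdef hcdef hLdef
  have hD : 0 < D := by rw [hDdef]; nlinarith [mul_pos hb hL]
  have hD' : (0:ℝ) < b*L + c := by nlinarith [mul_pos hb hL]
  have ht : 0 ≤ t := by
    rw [htdef]
    apply div_nonneg _ (sq_nonneg D)
    have h1 : (0:ℝ) ≤ 2*c^2*L := by positivity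
    nlinarith
  have hs1 : 1 ≤ Real.sqrt (1+t) := by
    nlinarith [Real.sq_sqrt (show (0:ℝ) ≤ 1+t by linarith), Real.sqrt_nonneg (1+t)]
  have hm2 : 0 ≤ b*D*(Real.sqrt (1+t) - 1)/c^2 :=
    div_nonneg (mul_nonneg (mul_pos hb hD).le (by linarith)) (sq_nonneg c)
  -- Goal 1 : S2 ≤ ηs
  have goal1 : a - b*D*(Real.sqrt (1+t) - 1)/c^2 ≤ ηs := by
    rcases le_or_gt (a - ηs) 0 with hm | hm
    · linarith
    · have hw : 0 < 1 - z := by nlinarith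
      have hQ : (1 - z) + (1 - z)^2/2 ≤ (ηs - 1) * L := by
        have := log_quad_aux hz (by linarith)
        rw [hlogz] at this
        linarith
      have hQ2 : 2*b*(c*(a-ηs)) + (c*(a-ηs))^2 ≤ 2*b^2*((ηs-1)*L) := by
        rw [key]
        nlinarith [hQ, sq_nonneg b]
      have htD : b^2*D^2*(1+t) = b^2*D^2 + 2*b^2*c^2*L*(a-1) := by
        rw [htdef]
        field_simp
      have hsq : (c^2*(a-ηs) + b*D)^2 ≤ b^2*D^2*(1+t) := by
        rw [htD, hDdef]
        nlinarith [mul_le_mul_of_nonneg_left hQ2 (sq_nonneg c)]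
      have hpos : 0 ≤ c^2*(a-ηs) + b*D := by
        nlinarith [mul_nonneg (sq_nonneg c) hm.le, mul_pos hb hD]
      have h5 : c^2*(a-ηs) + b*D ≤ b*D*Real.sqrt (1+t) := by
        have hs := Real.sqrt_le_sqrt hsq
        rw [Real.sqrt_sq hpos, show b^2*D^2*(1+t) = (b*D)^2 * (1+t) by ring,
          Real.sqrt_mul (sq_nonneg _), Real.sqrt_sq (mul_pos hb hD).le] at hs
        exact hs
      have h6 : a - ηs ≤ b*D*(Real.sqrt (1+t) - 1)/c^2 := by
        rw [le_div_iff₀ (pow_pos hc 2)]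
        nlinarith [h5]
      linarith
  -- Goal 2 : S1 ≤ S2
  have goal2 : a - b*(a-1)/(b + c/L) ≤ a - b*D*(Real.sqrt (1+t) - 1)/c^2 := by
    have hsqle : Real.sqrt (1+t) ≤ 1 + t/2 := by
      have h := Real.sqrt_le_sqrt (show 1 + t ≤ (1 + t/2)^2 by nlinarith [sq_nonneg t])
      rwa [Real.sqrt_sq (by linarith : (0:ℝ) ≤ 1 + t/2)] at h
    have hden : 0 < b + c/L := add_pos hb (div_pos hc hL)
    have h6 : b*D*(t/2)/c^2 = b*(a-1)/(b + c/L) := by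
      rw [htdef, hDdef]
      field_simp
    have h7 : b*D*(Real.sqrt (1+t) - 1)/c^2 ≤ b*D*(t/2)/c^2 := by
      have hnum : b*D*(Real.sqrt (1+t) - 1) ≤ b*D*(t/2) :=
        mul_le_mul_of_nonneg_left (by linarith) (mul_pos hb hD).le
      exact div_le_div_of_nonneg_right hnum (pow_pos hc 2).le
    rw [h6] at h7
    linarith
  -- Goal 3 : S0 ≤ S1
  have goal3 : a - b*(a-1)/(b+1) ≤ a - b*(a-1)/(b + c/L) := by
    have h1 : (1:ℝ) ≤ c/L := by rw [le_div_iff₀ hL]; linarith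
    have h2' : b*(a-1)/(b + c/L) ≤ b*(a-1)/(b+1) := by
      apply div_le_div_of_nonneg_left (mul_nonneg hb.le (by linarith)) (by linarith)
      linarith
    linarith
  -- Goal 4 : 0 ≤ S0
  have goal4 : 0 ≤ a - b*(a-1)/(b+1) := by
    rw [sub_nonneg, div_le_iff₀ (by linarith : (0:ℝ) < b+1)]
    nlinarith
  exact ⟨goal1, goal2, goal3, goal4⟩
end

section
/- Let a ≥ 1 and b > 0. For u ∈ (0,1) let η*(u) denote the unique root in [0,∞) of the function η ↦ ((u·b − (1−u)·(a−η))/b)·u^{−η} − 1. Then u ↦ η*(u) is non-increasing on (0,1): for all 0 < u₁ ≤ u₂ < 1, η*(u₁) ≥ η*(u₂). -/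
/-- Clearing denominators in the root equation. -/
lemma Rfun_eq_zero_iff {a b u η : ℝ} (hb : 0 < b) (hu : 0 < u) :
    Rfun a b u η = 0 ↔ u * b - (1 - u) * (a - η) = b * u ^ η := by
  have hpow : (0:ℝ) < u ^ η := Real.rpow_pos_of_pos hu η
  have hneg : u ^ (-η) = (u ^ η)⁻¹ := Real.rpow_neg hu.le η ▸ rfl
  rw [Rfun, hneg, sub_eq_zero, ← div_eq_mul_inv, div_div,
    div_eq_one_iff_eq (by positivity)]

/-- **Monotonicity of the root `η*(u)` when `a ≥ 1`.** Let `a ≥ 1`, `b > 0`, and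
for `u ∈ (0,1)` let `η*(u)` be the unique root of `η ↦ R(a,b,u,η)` in `[0, ∞)`.
Then `u ↦ η*(u)` is non-increasing on `(0,1)`. -/
theorem stmt11 (a b : ℝ) (ha : 1 ≤ a) (hb : 0 < b) (ηs : ℝ → ℝ)
    (hroot : ∀ u ∈ Set.Ioo (0 : ℝ) 1, 0 ≤ ηs u ∧ Rfun a b u (ηs u) = 0)
    (huniq : ∀ u ∈ Set.Ioo (0 : ℝ) 1, ∀ η', 0 ≤ η' → Rfun a b u η' = 0 → η' = ηs u) :
    ∀ u₁ u₂ : ℝ, 0 < u₁ → u₁ ≤ u₂ → u₂ < 1 → ηs u₂ ≤ ηs u₁ := by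
  intro u₁ u₂ h1 h12 h2
  rcases eq_or_lt_of_le h12 with rfl | hlt
  · exact le_refl _
  have hu1 : u₁ ∈ Set.Ioo (0:ℝ) 1 := ⟨h1, hlt.trans h2⟩
  have hu2 : u₂ ∈ Set.Ioo (0:ℝ) 1 := ⟨h1.trans hlt, h2⟩
  obtain ⟨hη10, hR1⟩ := hroot u₁ hu1
  obtain ⟨hη20, hR2⟩ := hroot u₂ hu2
  set η := ηs u₂ with hηdef
  -- root equations with denominators cleared
  have e1 : u₁ * b - (1 - u₁) * (a - ηs u₁) = b * u₁ ^ (ηs u₁) :=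
    (Rfun_eq_zero_iff hb h1).mp hR1
  have e2 : u₂ * b - (1 - u₂) * (a - η) = b * u₂ ^ η :=
    (Rfun_eq_zero_iff hb hu2.1).mp hR2
  -- the root at u₂ satisfies η ≥ 1
  have hη1 : 1 ≤ η := by
    by_contra h
    push_neg at h
    have hgt : u₂ ^ (1:ℝ) < u₂ ^ η :=
      Real.rpow_lt_rpow_of_exponent_gt hu2.1 hu2.2 h
    rw [Real.rpow_one] at hgt
    nlinarith [hu2.1, hu2.2]
  -- convexity of x ↦ x^η : write u₂ as convex combination of u₁ and 1
  set lam : ℝ := (1 - u₂) / (1 - u₁) with hlam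
  have h1u1 : (0:ℝ) < 1 - u₁ := by linarith [hu1.2]
  have hlam0 : 0 < lam := div_pos (by linarith [hu2.2]) h1u1
  have hlam1 : lam < 1 := (div_lt_one h1u1).mpr (by linarith)
  have hcomb : lam * u₁ + (1 - lam) = u₂ := by
    have hl : lam * (1 - u₁) = 1 - u₂ := by rw [hlam, div_mul_cancel₀ _ h1u1.ne']
    linear_combination -hl
  have hconv := convexOn_rpow hη1
  have hcx : u₂ ^ η ≤ lam * u₁ ^ η + (1 - lam) := by
    have := hconv.2 (Set.mem_Ici.mpr h1.le) (Set.mem_Ici.mpr zero_le_one)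
      hlam0.le (by linarith : (0:ℝ) ≤ 1 - lam) (by linarith)
    simpa [smul_eq_mul, hcomb] using this
  -- key inequality: F(u₁, η) ≤ 0
  have hF1 : u₁ * b - (1 - u₁) * (a - η) ≤ b * u₁ ^ η := by
    have hlamrel : 1 - u₂ = lam * (1 - u₁) := by
      rw [hlam, div_mul_cancel₀ _ h1u1.ne']
    nlinarith [hcx, e2, Real.rpow_pos_of_pos h1 η]
  -- conclude by strict monotonicity of F in η
  by_contra h
  push_neg at h
  have hgt : u₁ ^ η < u₁ ^ (ηs u₁) :=
    Real.rpow_lt_rpow_of_exponent_gt h1 hu1.2 h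
  nlinarith [hF1, e1, hgt, h1u1]
end

section
/- Let (k_n)_{n≥1} be a sequence of positive reals with k_n/n → k for some k ≥ 0 and with log(min(k_n, 1))/n → 0, and for each n let Z_n ∼ Gamma(k_n, 1). Define I : ℝ → [0,∞] by I(x) = x − k + k·log(k/x) for x > 0 (with k·log(k/x) = 0 when k = 0), I(0) = 0 if k = 0, I(0) = ∞ if k > 0, and I(x) = ∞ for x < 0. Then for every open set G ⊆ ℝ, liminf_{n→∞} (1/n)·log P(Z_n/n ∈ G) ≥ −inf_{x∈G} I(x). -/
open MeasureTheory ProbabilityTheory Filter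
open scoped ENNReal NNReal Classical

section AuxLDP

open Real Set

lemma pointwise_bound {s ε x : ℝ} (hs : 0 < s) (hε : 0 < ε) (hε1 : ε < 1) (hx : 0 < x) :
    exp (-x) * x ^ s ≤ ((s / (1 - ε)) ^ s * exp (-s)) * exp (-(ε * x)) := by
  have h1ε : 0 < 1 - ε := by linarith
  have hM : 0 < (s / (1 - ε) : ℝ) := by positivity
  rw [← Real.log_le_log_iff (by positivity) (by positivity)]
  rw [Real.log_mul (by positivity) (by positivity), Real.log_mul (by positivity) (by positivity),
    Real.log_mul (by positivity) (by positivity),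
    Real.log_exp, Real.log_exp, Real.log_exp, Real.log_rpow hx, Real.log_rpow hM]
  have hlx : Real.log x ≤ Real.log (s / (1 - ε)) + x * (1 - ε) / s - 1 := by
    have key : Real.log (x * (1 - ε) / s) ≤ x * (1 - ε) / s - 1 :=
      Real.log_le_sub_one_of_pos (by positivity)
    have : Real.log (x * (1 - ε) / s) = Real.log x - Real.log (s / (1 - ε)) := by
      rw [Real.log_div (by positivity) hs.ne', Real.log_mul hx.ne' h1ε.ne',
        Real.log_div hs.ne' h1ε.ne']
      ring
    linarith
  have h2 := mul_le_mul_of_nonneg_left hlx hs.le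
  have hss : s * (x * (1 - ε) / s) = x * (1 - ε) := by field_simp
  nlinarith [h2, hss]


lemma gamma_upper {s ε : ℝ} (hs : 0 < s) (hε : 0 < ε) (hε1 : ε < 1) :
    Real.Gamma s ≤ s ^ s * exp (-s) * (1 - ε) ^ (-s) / (ε * min s 1) := by
  have h1ε : 0 < 1 - ε := by linarith
  set M : ℝ := (s / (1 - ε)) ^ s * exp (-s) with hMdef
  have hM : 0 < M := by positivity
  have hint : Real.Gamma (s + 1) ≤ M / ε := by
    rw [Real.Gamma_eq_integral (by linarith)]
    have hIG : IntegrableOn (fun x : ℝ => exp (-x) * x ^ (s + 1 - 1)) (Ioi 0) :=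
      Real.GammaIntegral_convergent (by linarith)
    have hIE : IntegrableOn (fun x : ℝ => M * exp (-(ε * x))) (Ioi 0) := by
      have := (exp_neg_integrableOn_Ioi 0 hε)
      have h' := this.const_mul M
      simp only [neg_mul] at h'
      exact h'
    have hle : ∫ x in Ioi (0:ℝ), exp (-x) * x ^ (s + 1 - 1)
        ≤ ∫ x in Ioi (0:ℝ), M * exp (-(ε * x)) := by
      refine setIntegral_mono_on hIG hIE measurableSet_Ioi ?_
      intro x hx
      simp only [add_sub_cancel_right]
      exact pointwise_bound hs hε hε1 hx
    have hval : ∫ x in Ioi (0:ℝ), M * exp (-(ε * x)) = M / ε := by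
      rw [integral_const_mul]
      have h2 : ∫ x in Ioi (0:ℝ), exp (-(ε * x)) = ε⁻¹ := by
        have h := integral_exp_neg_mul_rpow one_pos hε
        simp only [Real.rpow_one] at h
        rw [show (fun x : ℝ => exp (-(ε * x))) = (fun x : ℝ => exp (-ε * x)) by
          funext x; ring_nf]
        rw [h]
        norm_num [Real.Gamma_two, Real.rpow_neg_one]
      rw [h2]; ring
    linarith
  have hrec : Real.Gamma s = Real.Gamma (s + 1) / s := by
    rw [Real.Gamma_add_one hs.ne']; field_simp
  have hmin : 0 < min s 1 := lt_min hs one_pos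
  have hMeq : M = s ^ s * exp (-s) * (1 - ε) ^ (-s) := by
    rw [hMdef, Real.div_rpow hs.le h1ε.le, Real.rpow_neg h1ε.le]
    ring
  rw [hrec, ← hMeq]
  calc Real.Gamma (s + 1) / s ≤ (M / ε) / s := by gcongr
  _ = M / (ε * s) := by rw [div_div]
  _ ≤ M / (ε * min s 1) := by
      gcongr <;> first | exact hM.le | positivity | exact min_le_left _ _


lemma log_min' {u v : ℝ} (hu : 0 < u) (hv : 0 < v) :
    Real.log (min u v) = min (Real.log u) (Real.log v) := by
  rcases le_total u v with h | h
  · rw [min_eq_left h, min_eq_left (Real.log_le_log hu h)]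
  · rw [min_eq_right h, min_eq_right (Real.log_le_log hv h)]


lemma measure_lower {s a b : ℝ} (hs : 0 < s) (ha : 0 < a) (hab : a < b) :
    ENNReal.ofReal ((b - a) * (exp (-b) * (min (a ^ (s-1)) (b ^ (s-1)) / Real.Gamma s)))
      ≤ gammaMeasure s 1 (Ioo a b) := by
  have hG : 0 < Real.Gamma s := Real.Gamma_pos_of_pos hs
  rw [gammaMeasure, withDensity_apply _ measurableSet_Ioo]
  set m : ℝ := exp (-b) * (min (a ^ (s-1)) (b ^ (s-1)) / Real.Gamma s) with hm
  have hminp : 0 < min (a ^ (s-1)) (b ^ (s-1)) := by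
    have h1 : 0 < a ^ (s-1) := Real.rpow_pos_of_pos ha _
    have h2 : 0 < b ^ (s-1) := Real.rpow_pos_of_pos (ha.trans hab) _
    exact lt_min h1 h2
  have hmpos : 0 < m := by positivity
  have hpt : ∀ x ∈ Ioo a b, ENNReal.ofReal m ≤ gammaPDF s 1 x := by
    intro x hx
    have hxa : a < x := hx.1
    have hxb : x < b := hx.2
    have hx0 : 0 < x := ha.trans hxa
    rw [gammaPDF_of_nonneg hx0.le]
    apply ENNReal.ofReal_le_ofReal
    have e1 : exp (-b) ≤ exp (-(1 * x)) := by
      apply Real.exp_le_exp.2; linarith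
    have e2 : min (a ^ (s-1)) (b ^ (s-1)) ≤ x ^ (s-1) := by
      rcases le_or_gt 0 (s - 1) with h | h
      · exact le_trans (min_le_left _ _) (Real.rpow_le_rpow ha.le hxa.le h)
      · exact le_trans (min_le_right _ _) (Real.rpow_le_rpow_of_nonpos hx0 hxb.le h.le)
    have hrw : (1:ℝ) ^ s / Real.Gamma s * x ^ (s-1) * exp (-(1 * x))
        = exp (-(1*x)) * (x ^ (s-1) / Real.Gamma s) := by
      rw [Real.one_rpow]; ring
    rw [hrw, hm]
    have hx1 : 0 < x ^ (s-1) := Real.rpow_pos_of_pos hx0 _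
    apply mul_le_mul e1 _ (by positivity) (exp_pos _).le
    exact div_le_div_of_nonneg_right e2 hG.le
  calc ENNReal.ofReal ((b-a) * m) = ENNReal.ofReal m * volume (Ioo a b) := by
        rw [Real.volume_Ioo, ← ENNReal.ofReal_mul hmpos.le, mul_comm]
  _ = ∫⁻ _ in Ioo a b, ENNReal.ofReal m := (setLIntegral_const _ _).symm
  _ ≤ ∫⁻ x in Ioo a b, gammaPDF s 1 x := by
        apply setLIntegral_mono (measurable_gammaPDFReal s 1).ennreal_ofReal hpt


lemma key_lb (k : ℝ) (kseq : ℕ → ℝ) (hpos : ∀ n, 0 < kseq n)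
    (hlim : Tendsto (fun n : ℕ => kseq n / n) atTop (nhds k))
    (hlog : Tendsto (fun n : ℕ => Real.log (min (kseq n) 1) / n) atTop (nhds 0))
    (G : Set ℝ) (x δ ε : ℝ) (hδ : 0 < δ) (hδx : δ < x)
    (hsub : Set.Ioo (x-δ) (x+δ) ⊆ G) (hε : 0 < ε) (hε1 : ε < 1) :
    ((-(x+δ) + min (k*Real.log (x-δ)) (k*Real.log (x+δ)) - k*Real.log k + k
        + k*Real.log (1-ε) : ℝ) : EReal)
      ≤ liminf (fun n : ℕ => (((n : ℝ)⁻¹ : ℝ) : EReal)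
        * ENNReal.log (gammaMeasure (kseq n) 1 {t : ℝ | t / n ∈ G})) atTop := by
  have hxδ : 0 < x - δ := by linarith
  have hxδ' : 0 < x + δ := by linarith
  have h1ε : 0 < 1 - ε := by linarith
  set F : ℕ → ℝ := fun n =>
    (Real.log (2*δ)/n + Real.log n/n - (x+δ))
    + (-(Real.log n/n) + min ((kseq n/n - 1/n)*Real.log (x-δ)) ((kseq n/n - 1/n)*Real.log (x+δ))
        - (kseq n/n)*Real.log (kseq n/n))
    + kseq n/n + (kseq n/n)*Real.log (1-ε) + Real.log ε/n + Real.log (min (kseq n) 1)/n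
    with hFdef
  -- limit of F
  have hlogn : Tendsto (fun n : ℕ => Real.log n / n) atTop (nhds 0) :=
    (Real.isLittleO_log_id_atTop.tendsto_div_nhds_zero).comp tendsto_natCast_atTop_atTop
  have hFlim : Tendsto F atTop (nhds (-(x+δ) + min (k*Real.log (x-δ)) (k*Real.log (x+δ))
      - k*Real.log k + k + k*Real.log (1-ε))) := by
    have hmin : Tendsto (fun n : ℕ => min ((kseq n/n - 1/n)*Real.log (x-δ))
        ((kseq n/n - 1/n)*Real.log (x+δ))) atTop
        (nhds (min ((k-0)*Real.log (x-δ)) ((k-0)*Real.log (x+δ)))) :=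
      ((hlim.sub tendsto_one_div_atTop_nhds_zero_nat).mul_const _).min
        ((hlim.sub tendsto_one_div_atTop_nhds_zero_nat).mul_const _)
    have hrlog : Tendsto (fun n : ℕ => (kseq n/n) * Real.log (kseq n/n)) atTop
        (nhds (k * Real.log k)) := (Real.continuous_mul_log.tendsto k).comp hlim
    have H := (((((((tendsto_const_div_atTop_nhds_zero_nat (Real.log (2*δ))).add
      hlogn).sub_const (x+δ)).add ((hlogn.neg.add hmin).sub hrlog)).add hlim).add
      (hlim.mul_const (Real.log (1-ε)))).add
      (tendsto_const_div_atTop_nhds_zero_nat (Real.log ε))).add hlog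
    simp only [sub_zero, neg_zero, add_zero, zero_add] at H
    convert H using 2
    ring
  -- eventual bound
  have hFle : ∀ᶠ n in atTop, (F n : EReal) ≤ (((n : ℝ)⁻¹ : ℝ) : EReal)
      * ENNReal.log (gammaMeasure (kseq n) 1 {t : ℝ | t / n ∈ G}) := by
    filter_upwards [eventually_ge_atTop 1] with n hn1
    set nr : ℝ := (n : ℝ) with hnr
    have hn : (0:ℝ) < nr := by rw [hnr]; exact_mod_cast Nat.lt_of_lt_of_le Nat.zero_lt_one hn1
    set s : ℝ := kseq n with hs'
    have hs : 0 < s := hpos n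
    set a : ℝ := nr * (x - δ) with ha'
    set b : ℝ := nr * (x + δ) with hb'
    have ha : 0 < a := by positivity
    have hab : a < b := by
      rw [ha', hb']; apply mul_lt_mul_of_pos_left _ hn; linarith
    set P : ℝ := (b - a) * (exp (-b) * (min (a ^ (s-1)) (b ^ (s-1)) / Real.Gamma s)) with hP'
    have hΓpos : 0 < Real.Gamma s := Real.Gamma_pos_of_pos hs
    have hminp : 0 < min (a ^ (s-1)) (b ^ (s-1)) :=
      lt_min (Real.rpow_pos_of_pos ha _) (Real.rpow_pos_of_pos (ha.trans hab) _)
    have hPpos : 0 < P := by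
      have : 0 < b - a := by linarith
      positivity
    -- inclusion
    have hsubn : Ioo a b ⊆ {t : ℝ | t / nr ∈ G} := by
      intro t ht
      apply hsub
      constructor
      · rw [lt_div_iff₀ hn]  -- (x - δ) < t / nr ↔ (x-δ)*nr < t
        calc (x - δ) * nr = a := by rw [ha']; ring
        _ < t := ht.1
      · rw [div_lt_iff₀ hn]
        calc t < b := ht.2
        _ = (x + δ) * nr := by rw [hb']; ring
    have hμ : ENNReal.ofReal P ≤ gammaMeasure s 1 {t : ℝ | t / nr ∈ G} :=
      le_trans (measure_lower hs ha hab) (measure_mono hsubn)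
    have hlogμ : ((Real.log P : ℝ) : EReal) ≤ ENNReal.log (gammaMeasure s 1 {t : ℝ | t / nr ∈ G}) := by
      rw [← ENNReal.log_ofReal_of_pos hPpos]
      exact ENNReal.log_monotone hμ
    -- expand log P
    have hlogP : Real.log P = Real.log (2*δ) + Real.log nr - nr*(x+δ)
        + min ((s-1)*Real.log a) ((s-1)*Real.log b) - Real.log (Real.Gamma s) := by
      have hba : b - a = (2*δ) * nr := by rw [ha', hb']; ring
      rw [hP']
      rw [hba]
      rw [Real.log_mul (by positivity) (mul_pos (exp_pos _) (div_pos hminp hΓpos)).ne']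
      rw [Real.log_mul (by positivity) hn.ne']
      rw [Real.log_mul (exp_pos _).ne' (div_pos hminp hΓpos).ne']
      rw [Real.log_div hminp.ne' hΓpos.ne', Real.log_exp]
      rw [log_min' (Real.rpow_pos_of_pos ha _) (Real.rpow_pos_of_pos (ha.trans hab) _)]
      rw [Real.log_rpow ha, Real.log_rpow (ha.trans hab), hb']
      ring
    -- Gamma bound in log form
    have hΓ : Real.log (Real.Gamma s) ≤ s*Real.log s - s - s*Real.log (1-ε)
        - Real.log ε - Real.log (min s 1) := by
      have h := Real.log_le_log hΓpos (gamma_upper hs hε hε1)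
      rw [Real.log_div (mul_pos (mul_pos (Real.rpow_pos_of_pos hs _) (exp_pos _))
            (Real.rpow_pos_of_pos h1ε _)).ne' (mul_pos hε (lt_min hs one_pos)).ne',
        Real.log_mul (mul_pos (Real.rpow_pos_of_pos hs _) (exp_pos _)).ne'
          (Real.rpow_pos_of_pos h1ε _).ne',
        Real.log_mul (Real.rpow_pos_of_pos hs _).ne' (exp_pos _).ne',
        Real.log_mul hε.ne' (lt_min hs one_pos).ne',
        Real.log_rpow hs, Real.log_rpow h1ε, Real.log_exp] at h
      linarith
    -- F n = nr⁻¹ * E with E explicit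
    have m1 : min ((s-1)*Real.log a) ((s-1)*Real.log b)
        = min ((s-1)*Real.log (x-δ)) ((s-1)*Real.log (x+δ)) + (s-1)*Real.log nr := by
      rw [ha', hb', Real.log_mul hn.ne' hxδ.ne', Real.log_mul hn.ne' hxδ'.ne',
        show (s-1)*(Real.log nr + Real.log (x-δ))
          = (s-1)*Real.log (x-δ) + (s-1)*Real.log nr by ring,
        show (s-1)*(Real.log nr + Real.log (x+δ))
          = (s-1)*Real.log (x+δ) + (s-1)*Real.log nr by ring,
        min_add_add_right]
    have m2 : min ((s/nr - 1/nr)*Real.log (x-δ)) ((s/nr - 1/nr)*Real.log (x+δ))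
        = nr⁻¹ * min ((s-1)*Real.log (x-δ)) ((s-1)*Real.log (x+δ)) := by
      rw [mul_min_of_nonneg _ _ (inv_nonneg.2 hn.le)]
      congr 1 <;> field_simp <;> ring
    have m3 : Real.log (s/nr) = Real.log s - Real.log nr := Real.log_div hs.ne' hn.ne'
    have hE : F n = nr⁻¹ * (Real.log (2*δ) + Real.log nr - nr*(x+δ)
        + min ((s-1)*Real.log a) ((s-1)*Real.log b)
        - (s*Real.log s - s - s*Real.log (1-ε) - Real.log ε - Real.log (min s 1))) := by
      rw [hFdef]
      simp only
      rw [m1, m2, m3]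
      field_simp
      ring
    have hEP : nr⁻¹ * (Real.log (2*δ) + Real.log nr - nr*(x+δ)
        + min ((s-1)*Real.log a) ((s-1)*Real.log b)
        - (s*Real.log s - s - s*Real.log (1-ε) - Real.log ε - Real.log (min s 1)))
        ≤ nr⁻¹ * Real.log P := by
      apply mul_le_mul_of_nonneg_left _ (inv_nonneg.2 hn.le)
      rw [hlogP]
      linarith
    calc ((F n : ℝ) : EReal) ≤ ((nr⁻¹ * Real.log P : ℝ) : EReal) := by
          exact_mod_cast EReal.coe_le_coe_iff.2 (hE ▸ hEP)
    _ = ((nr⁻¹ : ℝ) : EReal) * ((Real.log P : ℝ) : EReal) := EReal.coe_mul _ _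
    _ ≤ ((nr⁻¹ : ℝ) : EReal) * ENNReal.log (gammaMeasure s 1 {t : ℝ | t / nr ∈ G}) := by
          apply mul_le_mul_of_nonneg_left hlogμ
          exact_mod_cast EReal.coe_nonneg.2 (inv_nonneg.2 hn.le)
  calc ((-(x+δ) + min (k*Real.log (x-δ)) (k*Real.log (x+δ)) - k*Real.log k + k
        + k*Real.log (1-ε) : ℝ) : EReal)
      = liminf (fun n : ℕ => ((F n : ℝ) : EReal)) atTop :=
        ((EReal.tendsto_coe.2 hFlim).liminf_eq).symm
  _ ≤ _ := liminf_le_liminf hFle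

end AuxLDP

/-- The rate function of the Gamma LDP: `I(x) = x − k + k·log(k/x)` for `x > 0`
(with `k·log(k/x) = 0` when `k = 0`), `I(0) = 0` if `k = 0`, `I(0) = ∞` if
`k > 0`, and `I(x) = ∞` for `x < 0`. -/
noncomputable def gammaRate (k x : ℝ) : ℝ≥0∞ :=
  if x < 0 then ⊤
  else if x = 0 then (if k = 0 then 0 else ⊤)
  else ENNReal.ofReal (x - k + k * Real.log (k / x))

section MainProof
open Real Set

/-- **LDP lower bound for the Gamma distribution.** If `k_n > 0`, `k_n/n → k ≥ 0`,
`log(min(k_n,1))/n → 0` and `Z_n ∼ Gamma(k_n, 1)`, then for every open `G ⊆ ℝ`,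
`liminf (1/n)·log P(Z_n/n ∈ G) ≥ −inf_{x ∈ G} I(x)`. -/
theorem stmt14 (k : ℝ) (hk : 0 ≤ k) (kseq : ℕ → ℝ) (hpos : ∀ n, 0 < kseq n)
    (hlim : Tendsto (fun n : ℕ => kseq n / n) atTop (nhds k))
    (hlog : Tendsto (fun n : ℕ => Real.log (min (kseq n) 1) / n) atTop (nhds 0))
    (G : Set ℝ) (hG : IsOpen G) :
    -(((⨅ x ∈ G, gammaRate k x) : ℝ≥0∞) : EReal)
      ≤ liminf (fun n : ℕ => (((n : ℝ)⁻¹ : ℝ) : EReal)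
        * ENNReal.log (gammaMeasure (kseq n) 1 {t : ℝ | t / n ∈ G})) atTop := by
  set L := liminf (fun n : ℕ => (((n : ℝ)⁻¹ : ℝ) : EReal)
        * ENNReal.log (gammaMeasure (kseq n) 1 {t : ℝ | t / n ∈ G})) atTop with hL
  -- helper sequences
  have haux : ∀ m : ℕ, (0:ℝ) < 1/(m+2) ∧ (1:ℝ)/(m+2) < 1 := by
    intro m
    constructor
    · positivity
    · rw [div_lt_one (by positivity)]
      have : (0:ℝ) ≤ (m:ℝ) := Nat.cast_nonneg m
      linarith
  have htend2 : Tendsto (fun m : ℕ => (1:ℝ)/(m+2)) atTop (nhds 0) := by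
    apply Tendsto.div_atTop tendsto_const_nhds
    exact tendsto_atTop_add_const_right atTop 2 tendsto_natCast_atTop_atTop
  -- step 1: positive points
  have hq : ∀ x ∈ G, 0 < x → ((-(x - k + k*Real.log (k/x)) : ℝ) : EReal) ≤ L := by
    intro x hxG hx
    obtain ⟨δ0, hδ0, hball⟩ := Metric.isOpen_iff.1 hG x hxG
    rw [Real.ball_eq_Ioo] at hball
    set d : ℕ → ℝ := fun m => min (δ0/2) (x/(m+2)) with hd
    have hdpos : ∀ m, 0 < d m := fun m => lt_min (by positivity) (by positivity)
    have hdx : ∀ m, d m < x := by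
      intro m
      apply lt_of_le_of_lt (min_le_right _ _)
      rw [div_lt_iff₀ (by positivity)]
      nlinarith [Nat.cast_nonneg (α := ℝ) m]
    have hdsub : ∀ m, Set.Ioo (x - d m) (x + d m) ⊆ G := by
      intro m
      apply subset_trans _ hball
      apply Ioo_subset_Ioo <;> [skip; skip] <;>
        have := min_le_left (δ0/2) (x/(m+2)) <;> simp only [hd] at * <;> linarith
    have hkey : ∀ m : ℕ, ((-(x + d m) + min (k*Real.log (x - d m)) (k*Real.log (x + d m))
        - k*Real.log k + k + k*Real.log (1 - 1/(m+2)) : ℝ) : EReal) ≤ L := fun m =>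
      key_lb k kseq hpos hlim hlog G x (d m) (1/(m+2)) (hdpos m) (hdx m) (hdsub m)
        (haux m).1 (haux m).2
    have hdlim : Tendsto d atTop (nhds 0) := by
      have := (tendsto_const_nhds (x := δ0/2) (f := atTop (α := ℕ))).min
        (htend2.const_mul x)
      simp only [mul_zero] at this
      rw [hd]
      convert this using 2 with m
      · rw [mul_one_div]
      · rw [min_eq_right (by positivity)]
    have hllim : Tendsto (fun m => (-(x + d m) + min (k*Real.log (x - d m)) (k*Real.log (x + d m))
        - k*Real.log k + k + k*Real.log (1 - 1/(m+2)) : ℝ)) atTop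
        (nhds (-(x - k + k*Real.log (k/x)))) := by
      have hlogxd : Tendsto (fun m => Real.log (x - d m)) atTop (nhds (Real.log x)) := by
        have : Tendsto (fun m => x - d m) atTop (nhds x) := by
          simpa using tendsto_const_nhds.sub hdlim
        exact ((Real.continuousAt_log hx.ne').tendsto).comp this
      have hlogxd' : Tendsto (fun m => Real.log (x + d m)) atTop (nhds (Real.log x)) := by
        have : Tendsto (fun m => x + d m) atTop (nhds x) := by
          simpa using tendsto_const_nhds.add hdlim
        exact ((Real.continuousAt_log hx.ne').tendsto).comp this
      have hlog1ε : Tendsto (fun m : ℕ => Real.log (1 - 1/(m+2))) atTop (nhds 0) := by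
        have h1 : Tendsto (fun m : ℕ => 1 - 1/(m+2) : ℕ → ℝ) atTop (nhds 1) := by
          simpa using tendsto_const_nhds.sub htend2
        have := ((Real.continuousAt_log one_ne_zero).tendsto).comp h1
        simpa [Function.comp_def] using this
      have t1 : Tendsto (fun m => -(x + d m)) atTop (nhds (-(x+0))) :=
        (tendsto_const_nhds.add hdlim).neg
      have H := (((t1.add
        ((hlogxd.const_mul k).min (hlogxd'.const_mul k))).sub_const (k*Real.log k)).add_const k).add
        (hlog1ε.const_mul k)
      simp only [add_zero, mul_zero, min_self] at H
      convert H using 2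
      rcases eq_or_lt_of_le hk with hk0 | hk0
      · simp [← hk0]
      · rw [Real.log_div hk0.ne' hx.ne']
        ring
    exact le_of_tendsto (EReal.tendsto_coe.2 hllim) (Eventually.of_forall hkey)
  -- step 2
  have hstep2 : ∀ x ∈ G, -((gammaRate k x : ℝ≥0∞) : EReal) ≤ L := by
    intro x hxG
    rcases lt_trichotomy x 0 with hx | hx | hx
    · rw [gammaRate, if_pos hx]
      simp only [EReal.coe_ennreal_top, EReal.neg_top]
      exact bot_le
    · subst hx
      rw [gammaRate, if_neg (lt_irrefl 0), if_pos rfl]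
      rcases eq_or_lt_of_le hk with hk0 | hk0
      · rw [if_pos hk0.symm]
        simp only [EReal.coe_ennreal_zero, neg_zero]
        -- 0 ≤ L via small positive points
        obtain ⟨δ0, hδ0, hball⟩ := Metric.isOpen_iff.1 hG 0 hxG
        rw [Real.ball_eq_Ioo] at hball
        have hmem : ∀ m : ℕ, δ0/(m+2) ∈ G := by
          intro m
          apply hball
          constructor
          · have : (0:ℝ) < δ0/(m+2) := by positivity
            linarith
          · rw [zero_add, div_lt_iff₀ (by positivity)]
            nlinarith [Nat.cast_nonneg (α := ℝ) m]
        have hle : ∀ m : ℕ, ((-(δ0/(m+2) - k + k*Real.log (k/(δ0/(m+2)))) : ℝ) : EReal) ≤ L :=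
          fun m => hq _ (hmem m) (by positivity)
        have htt : Tendsto (fun m : ℕ => (-(δ0/(m+2) - k + k*Real.log (k/(δ0/(m+2)))) : ℝ))
            atTop (nhds 0) := by
          simp only [← hk0, zero_mul, sub_zero, add_zero]
          have := htend2.const_mul δ0
          simp only [mul_one_div, mul_zero] at this
          simpa using this.neg
        exact le_of_tendsto (EReal.tendsto_coe.2 htt) (Eventually.of_forall hle)
      · rw [if_neg hk0.ne']
        simp only [EReal.coe_ennreal_top, EReal.neg_top]
        exact bot_le
    · rw [gammaRate, if_neg (not_lt.2 hx.le), if_neg hx.ne']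
      set q : ℝ := x - k + k*Real.log (k/x) with hqdef
      calc -((ENNReal.ofReal q : ℝ≥0∞) : EReal) = ((-(q ⊔ 0) : ℝ) : EReal) := by
            rw [EReal.coe_ennreal_ofReal, ← EReal.coe_neg]
      _ ≤ ((-q : ℝ) : EReal) := EReal.coe_le_coe_iff.2 (by simp)
      _ ≤ L := hq x hxG hx
  -- step 3
  by_cases hc : (⨅ x ∈ G, gammaRate k x) = ⊤
  · rw [hc]
    simp only [EReal.coe_ennreal_top, EReal.neg_top]
    exact bot_le
  · by_contra hcon
    push_neg at hcon
    have h1 : ((⨅ x ∈ G, gammaRate k x : ℝ≥0∞) : EReal) < -L :=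
      EReal.lt_neg_of_lt_neg hcon
    obtain ⟨r, hr1, hr2⟩ := EReal.exists_between_coe_real h1
    have hr0 : (0:ℝ) < r := by
      have h0 : (0:EReal) ≤ ((⨅ x ∈ G, gammaRate k x : ℝ≥0∞) : EReal) :=
        EReal.coe_ennreal_nonneg _
      exact_mod_cast lt_of_le_of_lt h0 hr1
    have hcr : (⨅ x ∈ G, gammaRate k x) < ENNReal.ofReal r := by
      rw [← EReal.coe_ennreal_lt_coe_ennreal_iff]
      calc ((⨅ x ∈ G, gammaRate k x : ℝ≥0∞) : EReal) < (r : EReal) := hr1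
      _ = ((ENNReal.ofReal r : ℝ≥0∞) : EReal) := by
          rw [EReal.coe_ennreal_ofReal, max_eq_left hr0.le]
    rw [iInf_lt_iff] at hcr
    obtain ⟨x, hcr⟩ := hcr
    rw [iInf_lt_iff] at hcr
    obtain ⟨hxG, hcr⟩ := hcr
    have h2 : ((gammaRate k x : ℝ≥0∞) : EReal) < -L := by
      calc ((gammaRate k x : ℝ≥0∞) : EReal) < ((ENNReal.ofReal r : ℝ≥0∞) : EReal) :=
            EReal.coe_ennreal_lt_coe_ennreal_iff.2 hcr
      _ = (r : EReal) := by rw [EReal.coe_ennreal_ofReal, max_eq_left hr0.le]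
      _ < -L := hr2
    have h3 : L < -((gammaRate k x : ℝ≥0∞) : EReal) := EReal.lt_neg_of_lt_neg h2
    exact absurd (hstep2 x hxG) (not_le.2 h3)

end MainProof
end
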